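/- arXiv:1103.0414 — 9 statements merged into one kernel-verified Lean document; each statement's English description precedes it below -/
import Mathlib

section
/- Let F : Ω → Y be Gâteaux differentiable on the open set Ω ⊆ X, and suppose its derivative F′ : Ω → L(X,Y) satisfies the radius Lipschitz condition of center x* with L average on U ⊆ Ω. Then for every x ∈ U one has ‖F(x*) − F(x) − F′(x)(x* − x)‖ ≤ ∫₀^{‖x−x*‖} L(u)·u du. -/
/-!
Along the unit-speed segment `s ↦ x* + s • w`, `w = (x - x*) / ‖x - x*‖`, the map
`f s = F (x* + s • w) - s • F' x w` has derivative `(F' (x* + s • w) - F' x) w`, of norm at most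
`∫ u in s..r, L u` by the radius Lipschitz condition (`r = ‖x - x*‖`). The mean value inequality
bounds `‖f r - f 0‖` by `∫ s in 0..r, ∫ u in s..r, L u`, which integration by parts turns into
`∫ u in 0..r, u * L u`. Since `L` is only continuous on `[0, r)`, it may fail to be integrable up
to `r`; then both integrals take the junk value `0` and the identities still hold.
-/

open scoped ENNReal

open MeasureTheory intervalIntegral Set Filter Topology

section TailIntegral

variable {L : ℝ → ℝ} {a b : ℝ}

theorem ContinuousOn.intervalIntegrable_of_Ico_of_tail (hL : ContinuousOn L (Ico a b)) {s : ℝ}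
    (hs : s ∈ Ico a b) (h : IntervalIntegrable L volume s b) : IntervalIntegrable L volume a b :=
  ((hL.mono (Icc_subset_Ico_right hs.2)).intervalIntegrable_of_Icc hs.1).trans h

theorem integral_tail_eq_zero_of_not_intervalIntegrable (hL : ContinuousOn L (Ico a b))
    (hint : ¬ IntervalIntegrable L volume a b) {s : ℝ} (hs : s ∈ Icc a b) :
    ∫ u in s..b, L u = 0 := by
  rcases hs.2.lt_or_eq with hsb | rfl
  · exact integral_undef fun h =>
      hint (hL.intervalIntegrable_of_Ico_of_tail ⟨hs.1, hsb⟩ h)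
  · exact integral_same

theorem continuousOn_integral_tail (hL : ContinuousOn L (Ico a b)) (hab : a ≤ b) :
    ContinuousOn (fun s => ∫ u in s..b, L u) (Icc a b) := by
  by_cases hint : IntervalIntegrable L volume a b
  · simpa only [uIcc_of_le hab] using
      continuousOn_primitive_interval_left ((intervalIntegrable_iff').mp hint)
  · exact continuousOn_const.congr fun s hs =>
      integral_tail_eq_zero_of_not_intervalIntegrable hL hint hs

theorem not_intervalIntegrable_sub_mul (hL : ContinuousOn L (Ico a b)) (hab : a ≤ b)
    (hint : ¬ IntervalIntegrable L volume a b) :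
    ¬ IntervalIntegrable (fun u => (u - a) * L u) volume a b := by
  intro h
  rcases hab.eq_or_lt with rfl | hab
  · exact hint IntervalIntegrable.refl
  obtain ⟨c, hc⟩ : (Ioo a b).Nonempty := nonempty_Ioo.mpr hab
  refine hint (hL.intervalIntegrable_of_Ico_of_tail (Ioo_subset_Ico_self hc) ?_)
  have hpos : ∀ u ∈ uIcc c b, u - a ≠ 0 := fun u hu => by
    rw [uIcc_of_le hc.2.le] at hu
    linarith [hu.1, hc.1]
  have hinv : ContinuousOn (fun u => (u - a)⁻¹) (uIcc c b) :=
    (continuousOn_id.sub continuousOn_const).inv₀ hpos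
  have hsub : uIcc c b ⊆ uIcc a b :=
    uIcc_subset_uIcc (by simp [uIcc_of_le hab.le, hc.1.le, hc.2.le]) right_mem_uIcc
  refine ((h.mono_set hsub).continuousOn_mul hinv).congr_uIoo fun u hu => ?_
  exact inv_mul_cancel_left₀ (hpos u (Ioo_subset_Icc_self hu)) (L u)

theorem integral_integral_tail_eq_integral_sub_mul (hL : ContinuousOn L (Ico a b)) (hab : a ≤ b) :
    ∫ s in a..b, ∫ u in s..b, L u = ∫ u in a..b, (u - a) * L u := by
  by_cases hint : IntervalIntegrable L volume a b
  · have hderiv_tail : ∀ s ∈ Ioo (min a b) (max a b),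
        HasDerivAt (fun s => -∫ u in s..b, L u) (L s) s := by
      intro s hs
      rw [min_eq_left hab, max_eq_right hab] at hs
      have hsb : IntervalIntegrable L volume s b :=
        hint.mono_set (uIcc_subset_uIcc (by simp [uIcc_of_le hab, hs.1.le, hs.2.le]) right_mem_uIcc)
      have hmeas : StronglyMeasurableAtFilter L (𝓝 s) :=
        (hL.mono Ioo_subset_Ico_self).stronglyMeasurableAtFilter isOpen_Ioo s hs
      exact (integral_hasDerivAt_left hsb hmeas
        (hL.continuousAt (Ico_mem_nhds hs.1 hs.2))).fun_neg.congr_deriv (neg_neg _)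
    have hparts := integral_mul_deriv_eq_deriv_mul_of_hasDeriv_right (a := a) (b := b)
      (u := fun u => u - a) (u' := fun _ => 1) (v := fun s => -∫ u in s..b, L u) (v' := L)
      (by fun_prop)
      (by simpa only [uIcc_of_le hab] using (continuousOn_integral_tail hL hab).fun_neg)
      (fun s _ => ((hasDerivAt_id s).sub_const a).hasDerivWithinAt)
      (fun s hs => (hderiv_tail s hs).hasDerivWithinAt) intervalIntegrable_const hint
    simpa using hparts.symm
  · rw [integral_undef (not_intervalIntegrable_sub_mul hL hab hint)]
    refine (integral_congr fun s hs => ?_).trans intervalIntegral.integral_zero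
    exact integral_tail_eq_zero_of_not_intervalIntegrable hL hint (by rwa [uIcc_of_le hab] at hs)

end TailIntegral

section MeanValue

variable {E : Type*} [NormedAddCommGroup E] [NormedSpace ℝ E]

theorem norm_image_sub_le_integral_of_norm_deriv_right_le {f f' : ℝ → E} {g : ℝ → ℝ} {a b : ℝ}
    (hab : a ≤ b) (hf : ContinuousOn f (Icc a b))
    (hf' : ∀ s ∈ Ico a b, HasDerivWithinAt f (f' s) (Ici s) s)
    (hg : ContinuousOn g (Icc a b)) (bound : ∀ s ∈ Ico a b, ‖f' s‖ ≤ g s) :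
    ‖f b - f a‖ ≤ ∫ s in a..b, g s := by
  have hgint : IntegrableOn g (uIcc a b) := by
    simpa only [uIcc_of_le hab] using hg.integrableOn_Icc
  have hB : ∀ s ∈ Ico a b, HasDerivWithinAt (fun t => ∫ u in a..t, g u) (g s) (Ici s) s := by
    intro s hs
    have hIcc : Icc a b ∈ 𝓝[>] s := Icc_mem_nhdsGT_of_mem hs
    refine integral_hasDerivWithinAt_right ?_
      ((hg.stronglyMeasurableAtFilter_nhdsWithin measurableSet_Icc s).filter_mono
        (nhdsWithin_le_of_mem hIcc))
      ((hg s (Ico_subset_Icc_self hs)).mono_of_mem_nhdsWithin hIcc)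
    exact (hg.mono (Icc_subset_Icc_right hs.2.le)).intervalIntegrable_of_Icc hs.1
  have hBcont : ContinuousOn (fun t => ∫ u in a..t, g u) (Icc a b) := by
    simpa only [uIcc_of_le hab] using continuousOn_primitive_interval hgint
  exact image_norm_le_of_norm_deriv_right_le_deriv_boundary' (f := fun t => f t - f a)
    (hf.sub continuousOn_const) (fun s hs => (hf' s hs).sub_const (f a)) (by simp) hBcont hB
    bound (right_mem_Icc.mpr hab)

end MeanValue

theorem HasLineDerivAt.hasDerivAt_comp_add_smul {X Y : Type*} [NormedAddCommGroup X]
    [NormedSpace ℝ X] [NormedAddCommGroup Y] [NormedSpace ℝ Y] {F : X → Y} {x v : X} {y : Y}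
    {t : ℝ} (h : HasLineDerivAt ℝ F y (x + t • v) v) :
    HasDerivAt (fun s : ℝ => F (x + s • v)) y t := by
  rw [hasDerivAt_iff_tendsto_slope_zero]
  simpa only [add_smul, add_assoc] using h.tendsto_slope_zero

theorem norm_sub_sub_apply_le_integral_of_radius_lipschitz {X Y : Type*} [NormedAddCommGroup X]
    [NormedSpace ℝ X] [NormedAddCommGroup Y] [NormedSpace ℝ Y] {F : X → Y}
    {F' : X → X →L[ℝ] Y} {L : ℝ → ℝ} {xs x : X}
    (hline : ∀ t ∈ Icc (0:ℝ) 1, ∀ v,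
      HasLineDerivAt ℝ F (F' (xs + t • (x - xs)) v) (xs + t • (x - xs)) v)
    (hL : ContinuousOn L (Ico 0 ‖x - xs‖))
    (hrad : ∀ t ∈ Icc (0:ℝ) 1,
      ‖F' x - F' (xs + t • (x - xs))‖ ≤ ∫ u in t * ‖x - xs‖..‖x - xs‖, L u) :
    ‖F xs - F x - F' x (xs - x)‖ ≤ ∫ u in (0:ℝ)..‖x - xs‖, L u * u := by
  set r := ‖x - xs‖
  set w : X := r⁻¹ • (x - xs) with hw
  have hrw : r • w = x - xs := by
    rcases eq_or_ne (x - xs) 0 with h | h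
    · simp [hw, h]
    · exact smul_inv_smul₀ (norm_ne_zero_iff.mpr h) _
  have hsegment : ∀ s : ℝ, xs + s • w = xs + (s / r) • (x - xs) := fun s => by
    rw [hw, smul_smul, div_eq_mul_inv]
  have hsegment_mem : ∀ s ∈ Icc 0 r, s / r ∈ Icc (0:ℝ) 1 := fun s hs =>
    ⟨div_nonneg hs.1 (norm_nonneg _), div_le_one_of_le₀ hs.2 (norm_nonneg _)⟩
  set f : ℝ → Y := fun s => F (xs + s • w) - s • F' x w with hf
  have hderiv : ∀ s ∈ Icc 0 r, HasDerivAt f (F' (xs + s • w) w - F' x w) s := fun s hs => by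
    have hline_s := hline _ (hsegment_mem s hs) w
    rw [← hsegment] at hline_s
    simpa only [one_smul] using hline_s.hasDerivAt_comp_add_smul.fun_sub
      ((hasDerivAt_id' s).smul_const (F' x w))
  have hbound : ∀ s ∈ Ico 0 r, ‖F' (xs + s • w) w - F' x w‖ ≤ ∫ u in s..r, L u := by
    intro s hs
    have hr0 : r ≠ 0 := (hs.1.trans_lt hs.2).ne'
    have hw1 : ‖w‖ = 1 := by
      rw [hw, norm_smul, norm_inv, norm_norm, inv_mul_cancel₀ hr0]
    calc ‖F' (xs + s • w) w - F' x w‖ = ‖(F' x - F' (xs + s • w)) w‖ := by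
          rw [norm_sub_rev, sub_apply]
      _ ≤ ‖F' x - F' (xs + s • w)‖ * ‖w‖ := ContinuousLinearMap.le_opNorm _ _
      _ ≤ ∫ u in (s / r) * r..r, L u := by
          rw [hw1, mul_one, hsegment s]
          exact hrad _ (hsegment_mem s (Ico_subset_Icc_self hs))
      _ = ∫ u in s..r, L u := by rw [div_mul_cancel₀ s hr0]
  have hmvt := norm_image_sub_le_integral_of_norm_deriv_right_le (norm_nonneg (x - xs))
    (fun s hs => (hderiv s hs).continuousAt.continuousWithinAt)
    (fun s hs => (hderiv s (Ico_subset_Icc_self hs)).hasDerivWithinAt)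
    (continuousOn_integral_tail hL (norm_nonneg _)) hbound
  have hfr : f r - f 0 = -(F xs - F x - F' x (xs - x)) := by
    simp only [hf, hrw, ← map_smul, zero_smul, add_zero, map_zero, sub_zero,
      add_sub_cancel, ← neg_sub x xs, map_neg]
    abel
  rw [hfr, norm_neg, integral_integral_tail_eq_integral_sub_mul hL (norm_nonneg _)] at hmvt
  simpa only [sub_zero, mul_comm] using hmvt

theorem stmt_0_general {X Y : Type*} [NormedAddCommGroup X] [InnerProductSpace ℝ X]
    [NormedAddCommGroup Y] [InnerProductSpace ℝ Y]
    (Ω U : Set X) (hUΩ : U ⊆ Ω)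
    (xs : X)
    -- `U` is star-shaped with respect to `x*`
    (hstar : ∀ x ∈ U, ∀ t ∈ Set.Icc (0:ℝ) 1, xs + t • (x - xs) ∈ U)
    -- `R ∈ (0,+∞]` bounds `sup_{x ∈ U} ‖x − x*‖`
    (R : ℝ≥0∞) (hsup : ∀ x ∈ U, (‖x - xs‖₊ : ℝ≥0∞) ≤ R)
    -- `L : [0,R) → ℝ` is positive and continuous
    (L : ℝ → ℝ)
    (hLcont : ContinuousOn L {u : ℝ | 0 ≤ u ∧ ENNReal.ofReal u < R})
    (F : X → Y) (F' : X → (X →L[ℝ] Y))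
    -- `F` is Gâteaux differentiable on `Ω` with derivative `F'`
    (hdiff : ∀ x ∈ Ω, ∀ v : X,
      Filter.Tendsto (fun t : ℝ => t⁻¹ • (F (x + t • v) - F x))
        (nhdsWithin (0:ℝ) {(0:ℝ)}ᶜ) (nhds (F' x v)))
    -- `F'` satisfies the radius Lipschitz condition of center `x*` with `L` average on `U`
    (hrad : ∀ x ∈ U, ∀ t ∈ Set.Icc (0:ℝ) 1,
      ‖F' x - F' (xs + t • (x - xs))‖ ≤ ∫ u in t * ‖x - xs‖..‖x - xs‖, L u)
    (x : X) (hx : x ∈ U) :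
    ‖F xs - F x - F' x (xs - x)‖ ≤ ∫ u in (0:ℝ)..‖x - xs‖, L u * u := by
  have hL : ContinuousOn L (Ico 0 ‖x - xs‖) := hLcont.mono fun u hu =>
    ⟨hu.1, ((ENNReal.ofReal_lt_ofReal_iff (hu.1.trans_lt hu.2)).mpr hu.2).trans_le
      (by rw [ofReal_norm]; exact hsup x hx)⟩
  exact norm_sub_sub_apply_le_integral_of_radius_lipschitz
    (fun t ht v => hasLineDerivAt_iff_tendsto_slope_zero.mpr (hdiff _ (hUΩ (hstar x hx t ht)) v))
    hL (hrad x hx)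

/-- If `F` is Gâteaux differentiable on the open set `Ω` and its derivative `F'`
satisfies the radius Lipschitz condition of center `x*` with `L` average on the
star-shaped set `U ⊆ Ω`, then
`‖F(x*) − F(x) − F′(x)(x* − x)‖ ≤ ∫₀^{‖x−x*‖} L(u)·u du` for every `x ∈ U`. -/
theorem stmt_0 {X Y : Type*} [NormedAddCommGroup X] [InnerProductSpace ℝ X]
    [NormedAddCommGroup Y] [InnerProductSpace ℝ Y]
    (Ω U : Set X) (hΩopen : IsOpen Ω) (hΩne : Ω.Nonempty) (hUΩ : U ⊆ Ω)
    (xs : X) (hxsU : xs ∈ U)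
    -- `U` is star-shaped with respect to `x*`
    (hstar : ∀ x ∈ U, ∀ t ∈ Set.Icc (0:ℝ) 1, xs + t • (x - xs) ∈ U)
    -- `R ∈ (0,+∞]` bounds `sup_{x ∈ U} ‖x − x*‖`
    (R : ℝ≥0∞) (hR : 0 < R) (hsup : ∀ x ∈ U, (‖x - xs‖₊ : ℝ≥0∞) ≤ R)
    -- `L : [0,R) → ℝ` is positive and continuous
    (L : ℝ → ℝ)
    (hLpos : ∀ u : ℝ, 0 ≤ u → ENNReal.ofReal u < R → 0 < L u)
    (hLcont : ContinuousOn L {u : ℝ | 0 ≤ u ∧ ENNReal.ofReal u < R})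
    (F : X → Y) (F' : X → (X →L[ℝ] Y))
    -- `F` is Gâteaux differentiable on `Ω` with derivative `F'`
    (hdiff : ∀ x ∈ Ω, ∀ v : X,
      Filter.Tendsto (fun t : ℝ => t⁻¹ • (F (x + t • v) - F x))
        (nhdsWithin (0:ℝ) {(0:ℝ)}ᶜ) (nhds (F' x v)))
    -- `F'` satisfies the radius Lipschitz condition of center `x*` with `L` average on `U`
    (hrad : ∀ x ∈ U, ∀ t ∈ Set.Icc (0:ℝ) 1,
      ‖F' x - F' (xs + t • (x - xs))‖ ≤ ∫ u in t * ‖x - xs‖..‖x - xs‖, L u)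
    (x : X) (hx : x ∈ U) :
    ‖F xs - F x - F' x (xs - x)‖ ≤ ∫ u in (0:ℝ)..‖x - xs‖, L u * u :=
  stmt_0_general Ω U hUΩ xs hstar R hsup L hLcont F F' hdiff hrad x hx
end

section
/- Let L : [0,R) → ℝ be continuous, positive and increasing and let λ ≥ 0. Define γ_λ : [0,R) → ℝ by γ_λ(r) = r^{−(1+λ)} ∫₀^r u^λ L(u) du for r ∈ (0,R) and γ_λ(0) = L(0)/(1+λ). Then γ_λ is well-defined, continuous on [0,R), positive and increasing; moreover (1+λ)·γ_λ(r) ≤ L(r) for every r ∈ [0,R). Furthermore, γ_λ is constant equal to L/(1+λ) if L is constant, and γ_λ is strictly increasing if L is strictly increasing. -/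
open scoped ENNReal

open MeasureTheory Set Filter Topology

/-- Properties of `γ_λ(r) = r^{−(1+λ)} ∫₀^r u^λ L(u) du` (with `γ_λ(0) = L(0)/(1+λ)`)
for `L : [0,R) → ℝ` continuous, positive and increasing, and `λ ≥ 0`:
`γ_λ` is continuous, positive and increasing on `[0,R)`, satisfies
`(1+λ)γ_λ(r) ≤ L(r)`, is constant equal to `L/(1+λ)` if `L` is constant,
and is strictly increasing if `L` is strictly increasing. -/
theorem stmt_2 (R : ℝ≥0∞) (hR : 0 < R)
    (D : Set ℝ) (hD : D = {u : ℝ | 0 ≤ u ∧ ENNReal.ofReal u < R})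
    (L : ℝ → ℝ)
    (hLcont : ContinuousOn L D) (hLpos : ∀ u ∈ D, 0 < L u)
    (hLmono : ∀ u ∈ D, ∀ v ∈ D, u ≤ v → L u ≤ L v)
    (lam : ℝ) (hlam : 0 ≤ lam)
    (γ : ℝ → ℝ)
    (hγ : ∀ r ∈ D, γ r = if r = 0 then L 0 / (1 + lam)
        else (∫ u in (0:ℝ)..r, u ^ lam * L u) / r ^ (1 + lam)) :
    ContinuousOn γ D ∧
    (∀ r ∈ D, 0 < γ r) ∧
    (∀ u ∈ D, ∀ v ∈ D, u ≤ v → γ u ≤ γ v) ∧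
    (∀ r ∈ D, (1 + lam) * γ r ≤ L r) ∧
    ((∀ u ∈ D, ∀ v ∈ D, L u = L v) → ∀ r ∈ D, γ r = L 0 / (1 + lam)) ∧
    ((∀ u ∈ D, ∀ v ∈ D, u < v → L u < L v) →
      ∀ u ∈ D, ∀ v ∈ D, u < v → γ u < γ v) := by
  have hmem : ∀ r : ℝ, r ∈ D ↔ 0 ≤ r ∧ ENNReal.ofReal r < R := fun r => by rw [hD]; rfl
  have h1lam : (0:ℝ) < 1 + lam := by linarith
  have h0D : (0:ℝ) ∈ D := (hmem 0).2 ⟨le_refl 0, by simpa using hR⟩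
  have hDnn : ∀ r ∈ D, (0:ℝ) ≤ r := fun r hr => ((hmem r).1 hr).1
  have hdc : ∀ u v : ℝ, v ∈ D → 0 ≤ u → u ≤ v → u ∈ D := by
    intro u v hv hu huv
    exact (hmem u).2 ⟨hu, lt_of_le_of_lt (ENNReal.ofReal_le_ofReal huv) ((hmem v).1 hv).2⟩
  have hIccD : ∀ b ∈ D, Set.Icc (0:ℝ) b ⊆ D := fun b hb x hx => hdc x b hb hx.1 hx.2
  have hext : ∀ r ∈ D, ∃ r', r' ∈ D ∧ r < r' := by
    intro r hr
    obtain ⟨hr0, hrR⟩ := (hmem r).1 hr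
    rcases eq_or_ne R ⊤ with hT | hT
    · exact ⟨r + 1, (hmem _).2 ⟨by linarith, by simp [hT]⟩, by linarith⟩
    · have h1 : r < R.toReal := by
        rw [← ENNReal.ofReal_toReal hT] at hrR
        exact (ENNReal.ofReal_lt_ofReal_iff_of_nonneg hr0).1 hrR
      refine ⟨(r + R.toReal) / 2, (hmem _).2 ⟨by linarith, ?_⟩, by linarith⟩
      have h2 : ENNReal.ofReal ((r + R.toReal) / 2) < ENNReal.ofReal R.toReal :=
        (ENNReal.ofReal_lt_ofReal_iff_of_nonneg (by linarith)).2 (by linarith)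
      rwa [ENNReal.ofReal_toReal hT] at h2
  have hconv : Convex ℝ D :=
    Set.OrdConnected.convex
      ⟨fun x hx z hz y hy => hdc y z hz (le_trans (hDnn x hx) hy.1) hy.2⟩
  have hintsub : ∀ x ∈ interior D, 0 < x ∧ x ∈ D := by
    intro x hx
    refine ⟨?_, interior_subset hx⟩
    have : x ∈ interior (Set.Ici (0:ℝ)) := interior_mono (fun y hy => hDnn y hy) hx
    rwa [interior_Ici] at this
  set f : ℝ → ℝ := fun u => u ^ lam * L u with hfdef
  have hpowc : Continuous fun u : ℝ => u ^ lam := Real.continuous_rpow_const hlam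
  have hfc : ContinuousOn f D := (hpowc.continuousOn).mul hLcont
  have hfInt : ∀ b ∈ D, IntervalIntegrable f volume 0 b := by
    intro b hb
    apply ContinuousOn.intervalIntegrable
    apply hfc.mono
    rw [Set.uIcc_of_le (hDnn b hb)]
    exact hIccD b hb
  set I : ℝ → ℝ := fun r => ∫ u in (0:ℝ)..r, f u with hIdef
  have hJ : ∀ r : ℝ, (∫ u in (0:ℝ)..r, u ^ lam) = r ^ (1 + lam) / (1 + lam) := by
    intro r
    rw [integral_rpow (Or.inl (by linarith : (-1:ℝ) < lam)),
      Real.zero_rpow (by linarith : lam + 1 ≠ 0), add_comm lam 1, sub_zero]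
  have hupp : ∀ r ∈ D, 0 < r → I r ≤ L r * (r ^ (1 + lam) / (1 + lam)) := by
    intro r hrD hr0
    have hgi : IntervalIntegrable (fun u : ℝ => u ^ lam * L r) volume 0 r :=
      ((hpowc.mul continuous_const).continuousOn).intervalIntegrable
    have hle : ∀ x ∈ Set.Icc (0:ℝ) r, f x ≤ x ^ lam * L r := by
      intro x hx
      exact mul_le_mul_of_nonneg_left
        (hLmono x (hdc x r hrD hx.1 hx.2) r hrD hx.2) (Real.rpow_nonneg hx.1 lam)
    have h := intervalIntegral.integral_mono_on (le_of_lt hr0) (hfInt r hrD) hgi hle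
    rw [intervalIntegral.integral_mul_const, hJ] at h
    rw [mul_comm]
    exact h
  have hlow : ∀ r ∈ D, 0 < r → L 0 * (r ^ (1 + lam) / (1 + lam)) ≤ I r := by
    intro r hrD hr0
    have hgi : IntervalIntegrable (fun u : ℝ => u ^ lam * L 0) volume 0 r :=
      ((hpowc.mul continuous_const).continuousOn).intervalIntegrable
    have hle : ∀ x ∈ Set.Icc (0:ℝ) r, x ^ lam * L 0 ≤ f x := by
      intro x hx
      exact mul_le_mul_of_nonneg_left
        (hLmono 0 h0D x (hdc x r hrD hx.1 hx.2) hx.1) (Real.rpow_nonneg hx.1 lam)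
    have h := intervalIntegral.integral_mono_on (le_of_lt hr0) hgi (hfInt r hrD) hle
    rw [intervalIntegral.integral_mul_const, hJ] at h
    rw [mul_comm]
    exact h
  have hγ0 : γ 0 = L 0 / (1 + lam) := by simpa using hγ 0 h0D
  have hγval : ∀ r ∈ D, 0 < r → γ r = I r / r ^ (1 + lam) := by
    intro r hrD hr0; rw [hγ r hrD, if_neg (ne_of_gt hr0)]
  have hγlow : ∀ r ∈ D, L 0 / (1 + lam) ≤ γ r := by
    intro r hrD
    rcases eq_or_lt_of_le (hDnn r hrD) with h | h
    · rw [← h, hγ0]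
    · rw [hγval r hrD h, le_div_iff₀ (Real.rpow_pos_of_pos h _)]
      calc L 0 / (1 + lam) * r ^ (1 + lam) = L 0 * (r ^ (1 + lam) / (1 + lam)) := by ring
        _ ≤ I r := hlow r hrD h
  have hγuppdiv : ∀ r ∈ D, γ r ≤ L r / (1 + lam) := by
    intro r hrD
    rcases eq_or_lt_of_le (hDnn r hrD) with h | h
    · rw [← h, hγ0]
    · rw [hγval r hrD h, div_le_div_iff₀ (Real.rpow_pos_of_pos h _) h1lam]
      calc I r * (1 + lam) ≤ L r * (r ^ (1 + lam) / (1 + lam)) * (1 + lam) :=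
            mul_le_mul_of_nonneg_right (hupp r hrD h) (le_of_lt h1lam)
        _ = L r * r ^ (1 + lam) := by field_simp
  have hγupp : ∀ r ∈ D, (1 + lam) * γ r ≤ L r := by
    intro r hrD
    have h := hγuppdiv r hrD
    rw [le_div_iff₀ h1lam] at h
    linarith
  have hγpos : ∀ r ∈ D, 0 < γ r := fun r hr =>
    lt_of_lt_of_le (div_pos (hLpos 0 h0D) h1lam) (hγlow r hr)
  have hIcont : ContinuousOn I D := by
    intro r hrD
    obtain ⟨r', hr'D, hrr'⟩ := hext r hrD
    have hnn' : (0:ℝ) ≤ r' := hDnn r' hr'D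
    have h1 : ContinuousOn I (Set.Icc (0:ℝ) r') := by
      have h2 := intervalIntegral.continuousOn_primitive_interval
        (f := f) (a := 0) (b := r') (μ := volume)
        (by rw [Set.uIcc_of_le hnn']
            exact (hfc.mono (hIccD r' hr'D)).integrableOn_compact isCompact_Icc)
      rwa [Set.uIcc_of_le hnn'] at h2
    have h2 : ContinuousWithinAt I (Set.Icc 0 r') r := h1 r ⟨hDnn r hrD, le_of_lt hrr'⟩
    apply h2.mono_of_mem_nhdsWithin
    have h3 : D ∩ Set.Iic r' ∈ nhdsWithin r D :=
      Filter.inter_mem self_mem_nhdsWithin (mem_nhdsWithin_of_mem_nhds (Iic_mem_nhds hrr'))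
    exact Filter.mem_of_superset h3 (fun x hx => ⟨hDnn x hx.1, hx.2⟩)
  have hγcont : ContinuousOn γ D := by
    intro r hrD
    rcases eq_or_lt_of_le (hDnn r hrD) with h | h
    · subst h
      have hub : Tendsto (fun x => L x / (1 + lam)) (nhdsWithin 0 D) (𝓝 (L 0 / (1 + lam))) :=
        (hLcont 0 h0D).div_const (1 + lam)
      have key : Tendsto γ (nhdsWithin 0 D) (𝓝 (L 0 / (1 + lam))) := by
        apply tendsto_of_tendsto_of_tendsto_of_le_of_le' tendsto_const_nhds hub
        · filter_upwards [self_mem_nhdsWithin] with x hx; exact hγlow x hx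
        · filter_upwards [self_mem_nhdsWithin] with x hx; exact hγuppdiv x hx
      show Tendsto γ (nhdsWithin 0 D) (𝓝 (γ 0))
      rwa [hγ0]
    · have hpc : ContinuousWithinAt (fun x : ℝ => I x / x ^ (1 + lam)) D r := by
        apply (hIcont r hrD).div
        · exact (Real.continuousAt_rpow_const r (1 + lam) (Or.inl (ne_of_gt h))).continuousWithinAt
        · exact ne_of_gt (Real.rpow_pos_of_pos h _)
      apply hpc.congr_of_eventuallyEq ?_ (hγval r hrD h)
      filter_upwards [self_mem_nhdsWithin,
        (eventually_gt_nhds h).filter_mono nhdsWithin_le_nhds] with x hxD hx0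
      exact hγval x hxD hx0
  have hDeriv : ∀ r, 0 < r → r ∈ D →
      HasDerivAt γ
        ((f r * r ^ (1 + lam) - I r * ((1 + lam) * r ^ (1 + lam - 1))) / (r ^ (1 + lam)) ^ 2) r := by
    intro r hr0 hrD
    obtain ⟨r', hr'D, hrr'⟩ := hext r hrD
    have hIooD : Set.Ioo (0:ℝ) r' ⊆ D := fun y hy => hdc y r' hr'D (le_of_lt hy.1) (le_of_lt hy.2)
    have hrIoo : r ∈ Set.Ioo (0:ℝ) r' := ⟨hr0, hrr'⟩
    have hfcIoo := hfc.mono hIooD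
    have hI' : HasDerivAt I (f r) r :=
      intervalIntegral.integral_hasDerivAt_right (hfInt r hrD)
        (hfcIoo.stronglyMeasurableAtFilter isOpen_Ioo r hrIoo)
        (hfcIoo.continuousAt (isOpen_Ioo.mem_nhds hrIoo))
    have hp' : HasDerivAt (fun x : ℝ => x ^ (1 + lam)) ((1 + lam) * r ^ (1 + lam - 1)) r :=
      Real.hasDerivAt_rpow_const (Or.inl (ne_of_gt hr0))
    have hg' := hI'.div hp' (ne_of_gt (Real.rpow_pos_of_pos hr0 _))
    apply hg'.congr_of_eventuallyEq
    filter_upwards [isOpen_Ioo.mem_nhds hrIoo] with x hx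
    exact hγval x (hIooD hx) hx.1
  have hnum : ∀ r, 0 < r → r ∈ D →
      0 ≤ f r * r ^ (1 + lam) - I r * ((1 + lam) * r ^ (1 + lam - 1)) := by
    intro r hr0 hrD
    have he : (1:ℝ) + lam - 1 = lam := by ring
    rw [he]
    have h1 : (1 + lam) * I r ≤ L r * r ^ (1 + lam) := by
      calc (1 + lam) * I r ≤ (1 + lam) * (L r * (r ^ (1 + lam) / (1 + lam))) :=
            mul_le_mul_of_nonneg_left (hupp r hrD hr0) (le_of_lt h1lam)
        _ = L r * r ^ (1 + lam) := by field_simp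
    have hrl : (0:ℝ) ≤ r ^ lam := Real.rpow_nonneg (le_of_lt hr0) lam
    show 0 ≤ r ^ lam * L r * r ^ (1 + lam) - I r * ((1 + lam) * r ^ lam)
    nlinarith [h1, hrl]
  have hmono : ∀ u ∈ D, ∀ v ∈ D, u ≤ v → γ u ≤ γ v := by
    have hkey : MonotoneOn γ D := by
      apply monotoneOn_of_deriv_nonneg hconv hγcont
      · intro x hx
        obtain ⟨hx0, hxD⟩ := hintsub x hx
        exact (hDeriv x hx0 hxD).differentiableAt.differentiableWithinAt
      · intro x hx
        obtain ⟨hx0, hxD⟩ := hintsub x hx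
        rw [(hDeriv x hx0 hxD).deriv]
        exact div_nonneg (hnum x hx0 hxD) (sq_nonneg _)
    exact fun u hu v hv huv => hkey hu hv huv
  have hconstcase : (∀ u ∈ D, ∀ v ∈ D, L u = L v) → ∀ r ∈ D, γ r = L 0 / (1 + lam) := by
    intro hc r hrD
    have h1 := hγlow r hrD
    have h2 := hγuppdiv r hrD
    rw [hc r hrD 0 h0D] at h2
    linarith
  have hupps : (∀ u ∈ D, ∀ v ∈ D, u < v → L u < L v) →
      ∀ r ∈ D, 0 < r → I r < L r * (r ^ (1 + lam) / (1 + lam)) := by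
    intro hstr r hrD hr0
    have hlt : I r < ∫ u in (0:ℝ)..r, u ^ lam * L r := by
      apply intervalIntegral.integral_lt_integral_of_continuousOn_of_le_of_exists_lt hr0
        (hfc.mono (hIccD r hrD)) ((hpowc.mul continuous_const).continuousOn)
      · intro x hx
        exact mul_le_mul_of_nonneg_left
          (hLmono x (hdc x r hrD (le_of_lt hx.1) hx.2) r hrD hx.2)
          (Real.rpow_nonneg (le_of_lt hx.1) lam)
      · refine ⟨r / 2, ⟨by linarith, by linarith⟩, ?_⟩
        have h2D : r / 2 ∈ D := hdc _ r hrD (by linarith) (by linarith)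
        exact mul_lt_mul_of_pos_left (hstr _ h2D r hrD (by linarith))
          (Real.rpow_pos_of_pos (by linarith) lam)
    calc I r < ∫ u in (0:ℝ)..r, u ^ lam * L r := hlt
      _ = L r * (r ^ (1 + lam) / (1 + lam)) := by
          rw [intervalIntegral.integral_mul_const, hJ, mul_comm]
  have hsmono : (∀ u ∈ D, ∀ v ∈ D, u < v → L u < L v) →
      ∀ u ∈ D, ∀ v ∈ D, u < v → γ u < γ v := by
    intro hstr
    have hkey : StrictMonoOn γ D := by
      apply strictMonoOn_of_deriv_pos hconv hγcont
      intro x hx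
      obtain ⟨hx0, hxD⟩ := hintsub x hx
      rw [(hDeriv x hx0 hxD).deriv]
      apply div_pos ?_ (pow_pos (Real.rpow_pos_of_pos hx0 _) 2)
      have he : (1:ℝ) + lam - 1 = lam := by ring
      rw [he]
      have h1 : (1 + lam) * I x < L x * x ^ (1 + lam) := by
        calc (1 + lam) * I x < (1 + lam) * (L x * (x ^ (1 + lam) / (1 + lam))) :=
              mul_lt_mul_of_pos_left (hupps hstr x hxD hx0) h1lam
          _ = L x * x ^ (1 + lam) := by field_simp
      have hrl : (0:ℝ) < x ^ lam := Real.rpow_pos_of_pos hx0 lam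
      show 0 < x ^ lam * L x * x ^ (1 + lam) - I x * ((1 + lam) * x ^ lam)
      nlinarith [h1, hrl]
    exact fun u hu v hv huv => hkey hu hv huv
  exact ⟨hγcont, hγpos, hmono, hγupp, hconstcase, hsmono⟩
end

section
/- Let L : [0,R) → ℝ be continuous, positive and increasing. Define γ^c : [0,R) → ℝ by γ^c(r) = r^{−2} ∫₀^r (2r − u) L(u) du for r ∈ (0,R) and γ^c(0) = 3L(0)/2. Then γ^c is well-defined, continuous on [0,R), positive and increasing. -/
open scoped ENNReal

/-- Properties of `γ^c(r) = r^{−2} ∫₀^r (2r − u) L(u) du` (with `γ^c(0) = 3L(0)/2`)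
for `L : [0,R) → ℝ` continuous, positive and increasing:
`γ^c` is continuous, positive and increasing on `[0,R)`. -/
theorem stmt_3 (R : ℝ≥0∞) (hR : 0 < R)
    (D : Set ℝ) (hD : D = {u : ℝ | 0 ≤ u ∧ ENNReal.ofReal u < R})
    (L : ℝ → ℝ)
    (hLcont : ContinuousOn L D) (hLpos : ∀ u ∈ D, 0 < L u)
    (hLmono : ∀ u ∈ D, ∀ v ∈ D, u ≤ v → L u ≤ L v)
    (γc : ℝ → ℝ)
    (hγc : ∀ r ∈ D, γc r = if r = 0 then 3 * L 0 / 2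
        else (∫ u in (0:ℝ)..r, (2 * r - u) * L u) / r ^ 2) :
    ContinuousOn γc D ∧
    (∀ r ∈ D, 0 < γc r) ∧
    (∀ u ∈ D, ∀ v ∈ D, u ≤ v → γc u ≤ γc v) := by
  subst hD
  set D : Set ℝ := {u : ℝ | 0 ≤ u ∧ ENNReal.ofReal u < R} with hD
  -- basic facts about D
  have hDmem : ∀ {r : ℝ}, r ∈ D ↔ 0 ≤ r ∧ ENNReal.ofReal r < R := Iff.rfl
  have h0D : (0:ℝ) ∈ D := ⟨le_refl 0, by simpa using hR⟩
  have hdown : ∀ {r s : ℝ}, r ∈ D → 0 ≤ s → s ≤ r → s ∈ D := by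
    intro r s hr hs0 hsr
    exact ⟨hs0, lt_of_le_of_lt (ENNReal.ofReal_le_ofReal hsr) hr.2⟩
  -- clamp function
  set c : ℝ → ℝ := fun t => max 0 (min t 1) with hc
  have hc_mem : ∀ t, c t ∈ Set.Icc (0:ℝ) 1 := by
    intro t
    constructor
    · exact le_max_left _ _
    · exact max_le (by norm_num) (min_le_right _ _)
  have hc_eq : ∀ t ∈ Set.Icc (0:ℝ) 1, c t = t := by
    intro t ht
    simp [hc, min_eq_left ht.2, max_eq_right ht.1]
  have hc_cont : Continuous c := by fun_prop
  -- the key auxiliary function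
  set F : ℝ → ℝ := fun r => ∫ t in (0:ℝ)..1, (2 - t) * L (r * c t) with hF
  have hmemD : ∀ {r : ℝ}, r ∈ D → ∀ t, r * c t ∈ D := by
    intro r hr t
    have h1 := hc_mem t
    have h0r : 0 ≤ r := hr.1
    refine hdown hr (mul_nonneg h0r h1.1) ?_
    calc r * c t ≤ r * 1 := by nlinarith [h1.2]
    _ = r := mul_one r
  -- continuity of integrand in t (for fixed r ∈ D)
  have hcontT : ∀ {r : ℝ}, r ∈ D → Continuous (fun t => (2 - t) * L (r * c t)) := by
    intro r hr
    apply Continuous.mul (by fun_prop)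
    exact hLcont.comp_continuous (by fun_prop) (hmemD hr)
  have hII : ∀ {r : ℝ}, r ∈ D → IntervalIntegrable (fun t => (2 - t) * L (r * c t))
      MeasureTheory.volume 0 1 := fun hr => (hcontT hr).intervalIntegrable _ _
  -- γc = F on D
  have hγF : ∀ r ∈ D, γc r = F r := by
    intro r hr
    rcases eq_or_lt_of_le hr.1 with h0 | h0
    · -- r = 0
      have h0' : r = 0 := h0.symm
      subst h0'
      rw [hγc 0 hr, if_pos rfl]
      show 3 * L 0 / 2 = ∫ t in (0:ℝ)..1, (2 - t) * L (0 * c t)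
      simp only [zero_mul]
      rw [intervalIntegral.integral_mul_const,
        intervalIntegral.integral_sub (intervalIntegrable_const) (intervalIntegral.intervalIntegrable_id),
        intervalIntegral.integral_const, integral_id]
      norm_num
      ring
    · -- r > 0
      have hr0 : r ≠ 0 := ne_of_gt h0
      rw [hγc r hr, if_neg hr0]
      have key : (∫ u in (0:ℝ)..r, (2 * r - u) * L u) = r ^ 2 * F r := by
        have h1 : (∫ t in (0:ℝ)..1, (2 * r - r * t) * L (r * t))
            = r⁻¹ • ∫ u in (r * 0)..(r * 1), (2 * r - u) * L u := by
          exact intervalIntegral.integral_comp_mul_left (fun u => (2 * r - u) * L u) hr0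
        have h2 : (∫ t in (0:ℝ)..1, (2 * r - r * t) * L (r * t))
            = r * F r := by
          rw [hF, ← intervalIntegral.integral_const_mul]
          apply intervalIntegral.integral_congr
          intro t ht
          rw [Set.uIcc_of_le (by norm_num : (0:ℝ) ≤ 1)] at ht
          show (2 * r - r * t) * L (r * t) = r * ((2 - t) * L (r * c t))
          rw [hc_eq t ht]
          ring
        rw [h2] at h1
        rw [mul_zero, mul_one] at h1
        have h3 : (∫ u in (0:ℝ)..r, (2 * r - u) * L u) = r * (r * F r) := by
          rw [h1, smul_eq_mul]; field_simp
        rw [h3]; ring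
      rw [key]
      field_simp
  -- positivity of F
  have hFpos : ∀ r ∈ D, 0 < F r := by
    intro r hr
    apply intervalIntegral.intervalIntegral_pos_of_pos_on (hII hr)
    · intro t ht
      have h2t : 0 < 2 - t := by linarith [ht.2]
      exact mul_pos h2t (hLpos _ (hmemD hr t))
    · norm_num
  -- monotonicity of F
  have hFmono : ∀ u ∈ D, ∀ v ∈ D, u ≤ v → F u ≤ F v := by
    intro u hu v hv huv
    apply intervalIntegral.integral_mono_on (by norm_num) (hII hu) (hII hv)
    intro t ht
    have h2t : 0 ≤ 2 - t := by linarith [ht.2]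
    apply mul_le_mul_of_nonneg_left _ h2t
    exact hLmono _ (hmemD hu t) _ (hmemD hv t)
      (mul_le_mul_of_nonneg_right huv (hc_mem t).1)
  -- continuity of F on D
  have hFcont : ContinuousOn F D := by
    rw [continuousOn_iff_continuous_restrict]
    have : Continuous (Function.uncurry fun (x : D) (t : ℝ) => (2 - t) * L ((x:ℝ) * c t)) := by
      apply Continuous.mul (by fun_prop)
      apply hLcont.comp_continuous (by fun_prop)
      intro p
      exact hmemD p.1.2 p.2
    exact intervalIntegral.continuous_parametric_intervalIntegral_of_continuous' this 0 1
  refine ⟨?_, ?_, ?_⟩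
  · exact hFcont.congr hγF
  · intro r hr; rw [hγF r hr]; exact hFpos r hr
  · intro u hu v hv huv; rw [hγF u hu, hγF v hv]; exact hFmono u hu v hv huv
end

section
/- Let A, B ∈ L(X,Y) be bounded linear operators with A injective and with closed range, so that A*A is invertible in L(X,X) and the Moore–Penrose pseudoinverse of A is A† = (A*A)⁻¹A*. If ‖(B − A)A†‖ < 1, then B is injective, the range of B is closed (equivalently B*B is invertible, so B† = (B*B)⁻¹B* is well-defined), and ‖B†‖ ≤ ‖A†‖ / (1 − ‖(B − A)A†‖). -/
/-!
If `L` is a left inverse of `A`, writing `B x - A x = ((B - A) L) (A x)` gives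
`(1 - ‖(B - A) L‖) ‖A x‖ ≤ ‖B x‖`, while `‖x‖ ≤ ‖L‖ ‖A x‖`; so `‖x‖ ≤ K ‖B x‖` with
`K = ‖L‖ / (1 - ‖(B - A) L‖)`, and `B` is injective with closed range. Being bounded below, `B`
makes `B*B` coercive, so Lax–Milgram inverts it. Finally `x = (B*B)⁻¹ B* y` solves the normal
equation `B*B x = B* y`, so `B x` is the orthogonal projection of `y` on the range of `B`, and
`‖x‖ ≤ K ‖B x‖ ≤ K ‖y‖`.
-/

open ContinuousLinearMap

namespace ContinuousLinearMap

theorem norm_le_of_leftInverse_perturbation {𝕜 E F : Type*} [NontriviallyNormedField 𝕜]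
    [SeminormedAddCommGroup E] [NormedSpace 𝕜 E] [SeminormedAddCommGroup F] [NormedSpace 𝕜 F]
    {A B : E →L[𝕜] F} {L : F →L[𝕜] E} (hLA : L ∘L A = 1) (h : ‖(B - A) ∘L L‖ < 1) (x : E) :
    ‖x‖ ≤ ‖L‖ / (1 - ‖(B - A) ∘L L‖) * ‖B x‖ := by
  set ε := ‖(B - A) ∘L L‖
  have hLAx : L (A x) = x := by simpa using congr($hLA x)
  have hx : ‖x‖ ≤ ‖L‖ * ‖A x‖ := by simpa [hLAx] using L.le_opNorm (A x)
  have hAx : (1 - ε) * ‖A x‖ ≤ ‖B x‖ := by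
    have hdiff : ‖B x - A x‖ ≤ ε * ‖A x‖ := by
      have := ((B - A) ∘L L).le_opNorm (A x)
      rwa [comp_apply, hLAx, sub_apply] at this
    have := norm_sub_norm_le (A x) (B x)
    rw [norm_sub_rev] at this
    linarith
  rw [div_mul_eq_mul_div, le_div_iff₀ (sub_pos.2 h)]
  calc ‖x‖ * (1 - ε) ≤ ‖L‖ * ‖A x‖ * (1 - ε) := mul_le_mul_of_nonneg_right hx (by linarith)
    _ = ‖L‖ * ((1 - ε) * ‖A x‖) := by ring
    _ ≤ ‖L‖ * ‖B x‖ := mul_le_mul_of_nonneg_left hAx (norm_nonneg _)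

section Hilbert

variable {X Y : Type*} [NormedAddCommGroup X] [InnerProductSpace ℝ X] [CompleteSpace X]
  [NormedAddCommGroup Y] [InnerProductSpace ℝ Y] [CompleteSpace Y]

theorem norm_apply_le_of_adjoint_apply_eq (B : X →L[ℝ] Y) {x : X} {y : Y}
    (h : adjoint B (B x) = adjoint B y) : ‖B x‖ ≤ ‖y‖ := by
  have hsq : ‖B x‖ * ‖B x‖ ≤ ‖y‖ * ‖B x‖ :=
    calc ‖B x‖ * ‖B x‖ = inner ℝ (B x) (B x) := (real_inner_self_eq_norm_mul_norm _).symm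
      _ = inner ℝ y (B x) := by rw [← adjoint_inner_left, h, adjoint_inner_left]
      _ ≤ ‖y‖ * ‖B x‖ := real_inner_le_norm _ _
  nlinarith [norm_nonneg (B x), norm_nonneg y]

theorem isCoercive_innerSL_comp_adjoint_comp_self (B : X →L[ℝ] Y) {c : ℝ}
    (hc : 0 < c) (hB : ∀ x, c * ‖x‖ ≤ ‖B x‖) :
    IsCoercive ((innerSL ℝ).comp (adjoint B ∘L B)) := by
  refine ⟨c ^ 2, by positivity, fun x => ?_⟩
  have hform : (innerSL ℝ).comp (adjoint B ∘L B) x x = ‖B x‖ * ‖B x‖ := by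
    simp only [comp_apply, innerSL_apply_apply, adjoint_inner_left,
      real_inner_self_eq_norm_mul_norm]
  rw [hform]
  calc c ^ 2 * ‖x‖ * ‖x‖ = (c * ‖x‖) * (c * ‖x‖) := by ring
    _ ≤ ‖B x‖ * ‖B x‖ := mul_self_le_mul_self (by positivity) (hB x)

theorem exists_inverse_adjoint_comp_self (B : X →L[ℝ] Y) {K : ℝ}
    (hK0 : 0 ≤ K) (hK : ∀ x, ‖x‖ ≤ K * ‖B x‖) :
    ∃ T : X →L[ℝ] X, T ∘L (adjoint B ∘L B) = 1 ∧ (adjoint B ∘L B) ∘L T = 1 ∧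
      ‖T ∘L adjoint B‖ ≤ K := by
  -- `(K + 1)⁻¹` rather than `K⁻¹`, since `K = 0` is possible when `X` is trivial.
  have hbelow : ∀ x, (K + 1)⁻¹ * ‖x‖ ≤ ‖B x‖ := fun x => by
    rw [inv_mul_le_iff₀ (by linarith)]
    nlinarith [hK x, norm_nonneg (B x)]
  set e :=
    (isCoercive_innerSL_comp_adjoint_comp_self B (by positivity) hbelow).continuousLinearEquivOfBilin
  have he : (e : X →L[ℝ] X) = adjoint B ∘L B := by
    ext x
    refine ext_inner_right ℝ fun w => ?_
    simp [e, IsCoercive.continuousLinearEquivOfBilin_apply]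
  refine ⟨e.symm, by rw [← he]; exact e.coe_symm_comp_coe, by rw [← he]; exact e.coe_comp_coe_symm,
    opNorm_le_bound _ hK0 fun y => ?_⟩
  have hnormal : adjoint B (B (e.symm (adjoint B y))) = adjoint B y := by
    rw [← comp_apply (adjoint B) B, ← he]
    exact e.apply_symm_apply (adjoint B y)
  calc ‖e.symm (adjoint B y)‖ ≤ K * ‖B (e.symm (adjoint B y))‖ := hK _
    _ ≤ K * ‖y‖ := mul_le_mul_of_nonneg_left (norm_apply_le_of_adjoint_apply_eq B hnormal) hK0

end Hilbert

end ContinuousLinearMap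

theorem stmt_4_general {X Y : Type*} [NormedAddCommGroup X] [InnerProductSpace ℝ X] [CompleteSpace X]
    [NormedAddCommGroup Y] [InnerProductSpace ℝ Y] [CompleteSpace Y]
    (A B : X →L[ℝ] Y)
    (S : X →L[ℝ] X)
    (hS1 : S ∘L (adjoint A ∘L A) = 1)
    (Adag : Y →L[ℝ] X) (hAdag : Adag = S ∘L adjoint A)
    (hBA : ‖(B - A) ∘L Adag‖ < 1) :
    Function.Injective B ∧ IsClosed (Set.range B) ∧
    ∃ T : X →L[ℝ] X, T ∘L (adjoint B ∘L B) = 1 ∧ (adjoint B ∘L B) ∘L T = 1 ∧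
      ‖T ∘L adjoint B‖ ≤ ‖Adag‖ / (1 - ‖(B - A) ∘L Adag‖) := by
  have hLA : Adag ∘L A = 1 := by rw [hAdag, comp_assoc, hS1]
  have hK0 : 0 ≤ ‖Adag‖ / (1 - ‖(B - A) ∘L Adag‖) :=
    div_nonneg (norm_nonneg _) (sub_nonneg.2 hBA.le)
  have hK := norm_le_of_leftInverse_perturbation hLA hBA
  have hB : AntilipschitzWith ⟨_, hK0⟩ B := AddMonoidHomClass.antilipschitz_of_bound B hK
  exact ⟨hB.injective, hB.isClosed_range B.uniformContinuous,
    exists_inverse_adjoint_comp_self B hK0 hK⟩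

/-- Perturbation bound for the Moore–Penrose pseudoinverse: if `A` is injective with
closed range (so that `A*A` is invertible, with inverse `S`, and `A† = (A*A)⁻¹A*`)
and `‖(B − A)A†‖ < 1`, then `B` is injective with closed range, `B*B` is invertible
(with inverse `T`, so `B† = (B*B)⁻¹B*` is well-defined) and
`‖B†‖ ≤ ‖A†‖ / (1 − ‖(B − A)A†‖)`. -/
theorem stmt_4 {X Y : Type*} [NormedAddCommGroup X] [InnerProductSpace ℝ X] [CompleteSpace X]
    [NormedAddCommGroup Y] [InnerProductSpace ℝ Y] [CompleteSpace Y]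
    (A B : X →L[ℝ] Y)
    (hAinj : Function.Injective A) (hAcl : IsClosed (Set.range A))
    (S : X →L[ℝ] X)
    (hS1 : S ∘L (adjoint A ∘L A) = 1) (hS2 : (adjoint A ∘L A) ∘L S = 1)
    (Adag : Y →L[ℝ] X) (hAdag : Adag = S ∘L adjoint A)
    (hBA : ‖(B - A) ∘L Adag‖ < 1) :
    Function.Injective B ∧ IsClosed (Set.range B) ∧
    ∃ T : X →L[ℝ] X, T ∘L (adjoint B ∘L B) = 1 ∧ (adjoint B ∘L B) ∘L T = 1 ∧
      ‖T ∘L adjoint B‖ ≤ ‖Adag‖ / (1 - ‖(B - A) ∘L Adag‖) :=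
  stmt_4_general A B S hS1 Adag hAdag hBA
end

section
/- Let A, B ∈ L(X,Y) be bounded linear operators with A injective and with closed range, and set A† = (A*A)⁻¹A*. If ‖(B − A)A†‖ < 1, then B is injective with closed range, B† = (B*B)⁻¹B* is well-defined, and ‖B† − A†‖ ≤ √2 ‖A†‖ ‖B†‖ ‖B − A‖. Consequently, if ‖A†‖‖B − A‖ < 1, then ‖B† − A†‖ ≤ √2 ‖A†‖² ‖B − A‖ / (1 − ‖A†‖‖B − A‖). -/
/-!
Since `A† A = 1`, we have `B = (1 + (B - A) A†) A`, and the first factor is invertible by the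
Neumann series; so `B` has a continuous left inverse, hence is injective with closed range, and
`B*B` is coercive, hence invertible. With `P = A A†` the orthogonal projection onto `range A`,
`B† - A† = -B† (B - A) A† P + (B*B)⁻¹ (B - A)* (1 - P)`,
and `‖P y‖ + ‖(1 - P) y‖ ≤ √2 ‖y‖` bounds `‖B† - A†‖` by
`√2 max (‖B†‖ ‖B - A‖ ‖A†‖, ‖(B*B)⁻¹‖ ‖B - A‖)`, where `‖(B*B)⁻¹‖ = ‖B†‖²`. This is the first
bound when `‖B†‖ ≤ ‖A†‖`; otherwise exchange `A` and `B`. The second bound follows from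
`‖B†‖ ≤ ‖A†‖ / (1 - ‖A†‖ ‖B - A‖)`, obtained from `‖x‖ ≤ ‖A†‖ (‖B x‖ + ‖B - A‖ ‖x‖)` at
`x = B† y` together with `‖B B† y‖ ≤ ‖y‖`.
-/

open ContinuousLinearMap RealInnerProductSpace

section OrthogonalSplitting

variable {X Y : Type*} [NormedAddCommGroup X] [InnerProductSpace ℝ X]
  [NormedAddCommGroup Y] [InnerProductSpace ℝ Y]

theorem norm_add_norm_le_sqrt_two_mul_norm_add {x y : X} (h : ⟪x, y⟫ = 0) :
    ‖x‖ + ‖y‖ ≤ √2 * ‖x + y‖ := by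
  have hpyth := norm_add_sq_eq_norm_sq_add_norm_sq_real h
  rw [← Real.sqrt_sq (by positivity : 0 ≤ ‖x‖ + ‖y‖), ← Real.sqrt_sq (norm_nonneg (x + y)),
    ← Real.sqrt_mul zero_le_two]
  gcongr
  nlinarith [sq_nonneg (‖x‖ - ‖y‖)]

theorem opNorm_le_sqrt_two_mul_of_orthogonal_split {D F G : Y →L[ℝ] X} {P : Y →L[ℝ] Y}
    (hP : ∀ y, ⟪P y, y - P y⟫ = 0) (hD : ∀ y, D y = F (P y) + G (y - P y))
    {c : ℝ} (hF : ‖F‖ ≤ c) (hG : ‖G‖ ≤ c) : ‖D‖ ≤ √2 * c := by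
  have hc : 0 ≤ c := (norm_nonneg F).trans hF
  refine D.opNorm_le_bound (by positivity) fun y ↦ ?_
  calc ‖D y‖ ≤ ‖F (P y)‖ + ‖G (y - P y)‖ := hD y ▸ norm_add_le _ _
    _ ≤ c * ‖P y‖ + c * ‖y - P y‖ := by
        gcongr
        · exact F.le_of_opNorm_le hF _
        · exact G.le_of_opNorm_le hG _
    _ = c * (‖P y‖ + ‖y - P y‖) := by ring
    _ ≤ c * (√2 * ‖P y + (y - P y)‖) := by
        gcongr; exact norm_add_norm_le_sqrt_two_mul_norm_add (hP y)
    _ = √2 * c * ‖y‖ := by rw [add_sub_cancel]; ring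

end OrthogonalSplitting

theorem ContinuousLinearMap.HasLeftInverse.isUnit_adjoint_comp_self {X Y : Type*}
    [NormedAddCommGroup X] [InnerProductSpace ℝ X] [CompleteSpace X]
    [NormedAddCommGroup Y] [InnerProductSpace ℝ Y] [CompleteSpace Y]
    {B : X →L[ℝ] Y} (hB : B.HasLeftInverse) : IsUnit (adjoint B ∘L B) := by
  obtain ⟨L, hL⟩ := hB
  refine isUnit_of_forall_le_norm_inner_map _ (c := (1 + ‖L‖₊ ^ 2)⁻¹) (by positivity) fun x ↦ ?_
  have hx : ‖x‖ ≤ ‖L‖ * ‖B x‖ := by simpa only [hL x] using L.le_opNorm (B x)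
  rw [comp_apply, adjoint_inner_left, real_inner_self_eq_norm_sq,
    Real.norm_of_nonneg (sq_nonneg _), NNReal.coe_inv, ← div_eq_mul_inv,
    div_le_iff₀ (by positivity)]
  push_cast
  nlinarith [norm_nonneg x, norm_nonneg (B x), norm_nonneg L]

section Pinv

variable {X Y : Type*} [NormedAddCommGroup X] [InnerProductSpace ℝ X] [CompleteSpace X]
  [NormedAddCommGroup Y] [InnerProductSpace ℝ Y] [CompleteSpace Y]

/-- `A† = (A*A)⁻¹A*`; through `Ring.inverse` it is `0` unless `A*A` is invertible. -/
noncomputable def pinv (A : X →L[ℝ] Y) : Y →L[ℝ] X :=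
  Ring.inverse (adjoint A ∘L A) ∘L adjoint A

variable {A B : X →L[ℝ] Y}

theorem pinv_comp_self (hA : IsUnit (adjoint A ∘L A)) : pinv A ∘L A = 1 := by
  rw [pinv, comp_assoc, ← mul_def, Ring.inverse_mul_cancel _ hA]

theorem pinv_apply_apply (hA : IsUnit (adjoint A ∘L A)) (x : X) : pinv A (A x) = x :=
  congr($(pinv_comp_self hA) x)

theorem adjoint_apply_apply_pinv (hA : IsUnit (adjoint A ∘L A)) (y : Y) :
    adjoint A (A (pinv A y)) = adjoint A y := by
  have h := congr($(Ring.mul_inverse_cancel _ hA) (adjoint A y))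
  simpa [mul_def, pinv] using h

theorem inner_apply_pinv_sub_eq_zero (hA : IsUnit (adjoint A ∘L A)) (y : Y) :
    ⟪A (pinv A y), y - A (pinv A y)⟫ = 0 := by
  rw [← adjoint_inner_right, map_sub, adjoint_apply_apply_pinv hA, sub_self, inner_zero_right]

theorem norm_apply_pinv_le (hA : IsUnit (adjoint A ∘L A)) (y : Y) : ‖A (pinv A y)‖ ≤ ‖y‖ := by
  have hpyth := norm_add_sq_eq_norm_sq_add_norm_sq_real (inner_apply_pinv_sub_eq_zero hA y)
  rw [add_sub_cancel] at hpyth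
  nlinarith [norm_nonneg (A (pinv A y)), norm_nonneg y, sq_nonneg ‖y - A (pinv A y)‖]

theorem pinv_comp_adjoint_pinv (hA : IsUnit (adjoint A ∘L A)) :
    pinv A ∘L adjoint (pinv A) = Ring.inverse (adjoint A ∘L A) := by
  have hsa : IsSelfAdjoint (Ring.inverse (adjoint A ∘L A)) :=
    (isPositive_adjoint_comp_self A).isSelfAdjoint.ringInverse
  rw [pinv, adjoint_comp, adjoint_adjoint, ← star_eq_adjoint, hsa.star_eq, comp_assoc,
    ← comp_assoc (adjoint A), ← comp_assoc, ← mul_def, ← mul_def, Ring.inverse_mul_cancel _ hA,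
    one_mul]

theorem norm_inverse_adjoint_comp_self (hA : IsUnit (adjoint A ∘L A)) :
    ‖Ring.inverse (adjoint A ∘L A)‖ = ‖pinv A‖ ^ 2 := by
  have h := norm_adjoint_comp_self (adjoint (pinv A))
  rwa [adjoint_adjoint, pinv_comp_adjoint_pinv hA, LinearIsometryEquiv.norm_map, ← sq] at h

theorem hasLeftInverse_of_norm_sub_comp_pinv_lt_one (hA : IsUnit (adjoint A ∘L A))
    (hBA : ‖(B - A) ∘L pinv A‖ < 1) : B.HasLeftInverse := by
  have ht : ‖(A - B) ∘L pinv A‖ < 1 := by rwa [← norm_neg, ← neg_comp, neg_sub]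
  set u := Units.oneSub _ ht
  have hB : B = (u : Y →L[ℝ] Y) ∘L A := by
    simp only [u, Units.val_oneSub, sub_comp, comp_assoc, pinv_comp_self hA, one_def, comp_id,
      id_comp, sub_sub_cancel]
  rw [hB]
  exact HasLeftInverse.comp ⟨↑u⁻¹, fun y ↦ congr($(u.inv_mul) y)⟩ ⟨pinv A, pinv_apply_apply hA⟩

theorem norm_pinv_sub_pinv_le_of_norm_pinv_le (hA : IsUnit (adjoint A ∘L A))
    (hB : IsUnit (adjoint B ∘L B)) (hle : ‖pinv B‖ ≤ ‖pinv A‖) :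
    ‖pinv B - pinv A‖ ≤ √2 * ‖pinv A‖ * ‖pinv B‖ * ‖B - A‖ := by
  rw [mul_assoc √2, mul_assoc √2]
  refine opNorm_le_sqrt_two_mul_of_orthogonal_split (P := A ∘L pinv A)
    (inner_apply_pinv_sub_eq_zero hA) (F := -(pinv B ∘L (B - A) ∘L pinv A))
    (G := Ring.inverse (adjoint B ∘L B) ∘L adjoint (B - A)) (fun y ↦ ?_) ?_ ?_
  · have hB' : ∀ y, Ring.inverse (adjoint B ∘L B) (adjoint B y) = pinv B y := fun _ ↦ rfl
    simp only [map_sub, sub_apply, comp_apply, neg_apply, pinv_apply_apply hA,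
      pinv_apply_apply hB, adjoint_apply_apply_pinv hA, hB']
    abel
  · rw [norm_neg]
    calc ‖pinv B ∘L (B - A) ∘L pinv A‖ ≤ ‖pinv B‖ * (‖B - A‖ * ‖pinv A‖) :=
          (opNorm_comp_le _ _).trans (by gcongr; exact opNorm_comp_le _ _)
      _ = ‖pinv A‖ * ‖pinv B‖ * ‖B - A‖ := by ring
  · calc ‖Ring.inverse (adjoint B ∘L B) ∘L adjoint (B - A)‖
          ≤ ‖pinv B‖ ^ 2 * ‖B - A‖ := by
            rw [← norm_inverse_adjoint_comp_self hB, ← LinearIsometryEquiv.norm_map adjoint (B - A)]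
            exact opNorm_comp_le _ _
      _ ≤ ‖pinv A‖ * ‖pinv B‖ * ‖B - A‖ := by rw [sq]; gcongr

theorem norm_pinv_sub_pinv_le (hA : IsUnit (adjoint A ∘L A)) (hB : IsUnit (adjoint B ∘L B)) :
    ‖pinv B - pinv A‖ ≤ √2 * ‖pinv A‖ * ‖pinv B‖ * ‖B - A‖ := by
  rcases le_total ‖pinv B‖ ‖pinv A‖ with hle | hle
  · exact norm_pinv_sub_pinv_le_of_norm_pinv_le hA hB hle
  · have h := norm_pinv_sub_pinv_le_of_norm_pinv_le hB hA hle
    rwa [norm_sub_rev, norm_sub_rev A, mul_right_comm _ ‖pinv B‖] at h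

theorem norm_pinv_le_of_norm_pinv_mul_norm_sub_lt_one (hA : IsUnit (adjoint A ∘L A))
    (hB : IsUnit (adjoint B ∘L B)) (hlt : ‖pinv A‖ * ‖B - A‖ < 1) :
    ‖pinv B‖ ≤ ‖pinv A‖ / (1 - ‖pinv A‖ * ‖B - A‖) := by
  have hpos : 0 < 1 - ‖pinv A‖ * ‖B - A‖ := sub_pos.2 hlt
  refine opNorm_le_bound _ (by positivity) fun y ↦ ?_
  set x := pinv B y
  have hAx : ‖A x‖ ≤ ‖y‖ + ‖B - A‖ * ‖x‖ :=
    calc ‖A x‖ = ‖B x - (B - A) x‖ := by simp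
      _ ≤ ‖B x‖ + ‖B - A‖ * ‖x‖ := (norm_sub_le _ _).trans (by gcongr; exact le_opNorm _ _)
      _ ≤ ‖y‖ + ‖B - A‖ * ‖x‖ := by gcongr; exact norm_apply_pinv_le hB y
  have hx : ‖x‖ ≤ ‖pinv A‖ * (‖y‖ + ‖B - A‖ * ‖x‖) :=
    calc ‖x‖ = ‖pinv A (A x)‖ := by rw [pinv_apply_apply hA]
      _ ≤ ‖pinv A‖ * ‖A x‖ := le_opNorm _ _
      _ ≤ ‖pinv A‖ * (‖y‖ + ‖B - A‖ * ‖x‖) := by gcongr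
  rw [div_mul_eq_mul_div, le_div_iff₀ hpos]
  linarith

theorem norm_pinv_sub_pinv_le_of_norm_pinv_mul_norm_sub_lt_one (hA : IsUnit (adjoint A ∘L A))
    (hB : IsUnit (adjoint B ∘L B)) (hlt : ‖pinv A‖ * ‖B - A‖ < 1) :
    ‖pinv B - pinv A‖ ≤ √2 * ‖pinv A‖ ^ 2 * ‖B - A‖ / (1 - ‖pinv A‖ * ‖B - A‖) :=
  calc ‖pinv B - pinv A‖ ≤ √2 * ‖pinv A‖ * ‖pinv B‖ * ‖B - A‖ := norm_pinv_sub_pinv_le hA hB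
    _ ≤ √2 * ‖pinv A‖ * (‖pinv A‖ / (1 - ‖pinv A‖ * ‖B - A‖)) * ‖B - A‖ := by
        gcongr; exact norm_pinv_le_of_norm_pinv_mul_norm_sub_lt_one hA hB hlt
    _ = √2 * ‖pinv A‖ ^ 2 * ‖B - A‖ / (1 - ‖pinv A‖ * ‖B - A‖) := by ring

end Pinv

theorem stmt_5_general {X Y : Type*} [NormedAddCommGroup X] [InnerProductSpace ℝ X] [CompleteSpace X]
    [NormedAddCommGroup Y] [InnerProductSpace ℝ Y] [CompleteSpace Y]
    (A B : X →L[ℝ] Y)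
    (S : X →L[ℝ] X)
    (hS1 : S ∘L (adjoint A ∘L A) = 1) (hS2 : (adjoint A ∘L A) ∘L S = 1)
    (Adag : Y →L[ℝ] X) (hAdag : Adag = S ∘L adjoint A)
    (hBA : ‖(B - A) ∘L Adag‖ < 1) :
    Function.Injective B ∧ IsClosed (Set.range B) ∧
    ∃ T : X →L[ℝ] X, T ∘L (adjoint B ∘L B) = 1 ∧ (adjoint B ∘L B) ∘L T = 1 ∧
      ‖T ∘L adjoint B - Adag‖ ≤ Real.sqrt 2 * ‖Adag‖ * ‖T ∘L adjoint B‖ * ‖B - A‖ ∧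
      (‖Adag‖ * ‖B - A‖ < 1 →
        ‖T ∘L adjoint B - Adag‖ ≤
          Real.sqrt 2 * ‖Adag‖ ^ 2 * ‖B - A‖ / (1 - ‖Adag‖ * ‖B - A‖)) := by
  have hA : IsUnit (adjoint A ∘L A) := ⟨⟨_, S, hS2, hS1⟩, rfl⟩
  have hS : Ring.inverse (adjoint A ∘L A) = S := Ring.inverse_unit ⟨_, S, hS2, hS1⟩
  obtain rfl : Adag = pinv A := by rw [hAdag, pinv, hS]
  have hBl := hasLeftInverse_of_norm_sub_comp_pinv_lt_one hA hBA
  have hB := hBl.isUnit_adjoint_comp_self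
  exact ⟨hBl.injective, hBl.isClosed_range, Ring.inverse (adjoint B ∘L B),
    Ring.inverse_mul_cancel _ hB, Ring.mul_inverse_cancel _ hB, norm_pinv_sub_pinv_le hA hB,
    norm_pinv_sub_pinv_le_of_norm_pinv_mul_norm_sub_lt_one hA hB⟩

/-- Perturbation bound for the Moore–Penrose pseudoinverse: if `A` is injective with
closed range (inverse `S` of `A*A`, `A† = (A*A)⁻¹A*`) and `‖(B − A)A†‖ < 1`, then `B`
is injective with closed range, `B† = (B*B)⁻¹B*` is well-defined, and
`‖B† − A†‖ ≤ √2 ‖A†‖ ‖B†‖ ‖B − A‖`; consequently, if moreover `‖A†‖‖B − A‖ < 1`, then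
`‖B† − A†‖ ≤ √2 ‖A†‖² ‖B − A‖ / (1 − ‖A†‖‖B − A‖)`. -/
theorem stmt_5 {X Y : Type*} [NormedAddCommGroup X] [InnerProductSpace ℝ X] [CompleteSpace X]
    [NormedAddCommGroup Y] [InnerProductSpace ℝ Y] [CompleteSpace Y]
    (A B : X →L[ℝ] Y)
    (hAinj : Function.Injective A) (hAcl : IsClosed (Set.range A))
    (S : X →L[ℝ] X)
    (hS1 : S ∘L (adjoint A ∘L A) = 1) (hS2 : (adjoint A ∘L A) ∘L S = 1)
    (Adag : Y →L[ℝ] X) (hAdag : Adag = S ∘L adjoint A)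
    (hBA : ‖(B - A) ∘L Adag‖ < 1) :
    Function.Injective B ∧ IsClosed (Set.range B) ∧
    ∃ T : X →L[ℝ] X, T ∘L (adjoint B ∘L B) = 1 ∧ (adjoint B ∘L B) ∘L T = 1 ∧
      ‖T ∘L adjoint B - Adag‖ ≤ Real.sqrt 2 * ‖Adag‖ * ‖T ∘L adjoint B‖ * ‖B - A‖ ∧
      (‖Adag‖ * ‖B - A‖ < 1 →
        ‖T ∘L adjoint B - Adag‖ ≤
          Real.sqrt 2 * ‖Adag‖ ^ 2 * ‖B - A‖ / (1 - ‖Adag‖ * ‖B - A‖)) :=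
  stmt_5_general A B S hS1 hS2 Adag hAdag hBA
end

section
/- Let H : X → X be a bounded, self-adjoint linear operator with ⟨Hx, x⟩ ≥ c‖x‖² for some c > 0 (hence H is invertible), and let φ : X → ℝ ∪ {+∞} be proper, convex and lower semicontinuous. If p₁ minimizes x ↦ φ(x) + ½⟨H(x − z₁), x − z₁⟩ over X and p₂ minimizes x ↦ φ(x) + ½⟨H(x − z₂), x − z₂⟩ over X, then ‖p₁ − p₂‖ ≤ √(‖H‖‖H⁻¹‖) · ‖z₁ − z₂‖. In other words, the proximity operator prox_φ^H is Lipschitz with constant √(‖H‖‖H⁻¹‖) with respect to the norm of X. -/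
open scoped RealInnerProductSpace
open ContinuousLinearMap

/-!
The minimizer `p` of `φ + ½⟪H(· - z), · - z⟫` satisfies the subgradient inequality
`φ p + ⟪H(z - p), x - p⟫ ≤ φ x`, obtained by comparing `p` with the points `p + t(x - p)` and
letting `t → 0⁺`. Adding these inequalities for two minimizers gives firm nonexpansiveness in the
`H`-metric: `⟪Hu, u⟫ ≤ ⟪Hw, u⟫` for `u = p₁ - p₂`, `w = z₁ - z₂`, hence `⟪Hu, u⟫ ≤ ⟪Hw, w⟫`.
The constant comes from comparing the two norms: `‖u‖² ≤ ‖H⁻¹‖ ⟪Hu, u⟫` and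
`⟪Hw, w⟫ ≤ ‖H‖ ‖w‖²`.
-/

open Filter Topology

lemma le_of_forall_le_add_mul {a b c : ℝ} (h : ∀ t : ℝ, 0 < t → t < 1 → a ≤ b + t * c) :
    a ≤ b := by
  have hlim : Tendsto (fun t : ℝ => b + t * c) (𝓝[>] 0) (𝓝 b) := by
    have hcont : Continuous fun t : ℝ => b + t * c := by fun_prop
    simpa using (hcont.tendsto 0).mono_left nhdsWithin_le_nhds
  exact ge_of_tendsto hlim <| by
    filter_upwards [Ioo_mem_nhdsGT one_pos] with t ht using h t ht.1 ht.2

section QuadraticForm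

variable {X : Type*} [NormedAddCommGroup X] [InnerProductSpace ℝ X]

lemma LinearMap.IsSymmetric.inner_map_add_smul_self {T : X →L[ℝ] X}
    (hT : (T : X →ₗ[ℝ] X).IsSymmetric)
    (w v : X) (t : ℝ) :
    ⟪T (w + t • v), w + t • v⟫ = ⟪T w, w⟫ + 2 * t * ⟪T w, v⟫ + t ^ 2 * ⟪T v, v⟫ := by
  have hvw : ⟪T v, w⟫ = ⟪T w, v⟫ := (hT v w).trans (real_inner_comm _ _)
  simp only [map_add, map_smul, inner_add_left, inner_add_right, real_inner_smul_left,
    real_inner_smul_right, hvw]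
  ring

lemma ContinuousLinearMap.inner_map_self_le_opNorm_mul_sq (T : X →L[ℝ] X) (x : X) :
    ⟪T x, x⟫ ≤ ‖T‖ * ‖x‖ ^ 2 :=
  calc ⟪T x, x⟫ ≤ ‖T x‖ * ‖x‖ := real_inner_le_norm _ _
    _ ≤ ‖T‖ * ‖x‖ * ‖x‖ := by gcongr; exact T.le_opNorm x
    _ = ‖T‖ * ‖x‖ ^ 2 := by ring

namespace ContinuousLinearMap.IsPositive

variable {T : X →L[ℝ] X} (hT : T.IsPositive)
include hT

lemma inner_map_self_le_of_le_inner {u w : X} (h : ⟪T u, u⟫ ≤ ⟪T w, u⟫) :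
    ⟪T u, u⟫ ≤ ⟪T w, w⟫ := by
  have hexp := hT.isSymmetric.inner_map_add_smul_self w u (-1)
  have hnonneg := hT.inner_nonneg_left (w + (-1 : ℝ) • u)
  linarith

lemma norm_sq_le_opNorm_mul_inner_map_self {S : X →L[ℝ] X} (hS : T ∘L S = 1) (u : X) :
    ‖u‖ ^ 2 ≤ ‖S‖ * ⟪T u, u⟫ := by
  have hTS : T (S u) = u := by simpa using congr($hS u)
  rcases (norm_nonneg S).eq_or_lt with hS0 | hSpos
  · have hu : u = 0 := by rw [← hTS, norm_eq_zero.mp hS0.symm]; simp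
    simp [hu]
  have hcross : ⟪T u, S u⟫ = ‖u‖ ^ 2 := by
    rw [hT.inner_left_eq_inner_right, hTS, real_inner_self_eq_norm_sq]
  have hSu : ⟪T (S u), S u⟫ ≤ ‖S‖ * ‖u‖ ^ 2 := by
    simpa [hTS, real_inner_comm] using S.inner_map_self_le_opNorm_mul_sq u
  have hexp := hT.isSymmetric.inner_map_add_smul_self u (S u) (-‖S‖⁻¹)
  have hnonneg := hT.inner_nonneg_left (u + (-‖S‖⁻¹) • S u)
  have hSu' := mul_le_mul_of_nonneg_left hSu (sq_nonneg ‖S‖⁻¹)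
  have hcancel : ‖S‖⁻¹ ^ 2 * (‖S‖ * ‖u‖ ^ 2) = ‖S‖⁻¹ * ‖u‖ ^ 2 := by field_simp
  have key : ‖S‖⁻¹ * ‖u‖ ^ 2 ≤ ⟪T u, u⟫ := by
    rw [hexp, hcross] at hnonneg
    linarith
  rwa [inv_mul_le_iff₀ hSpos] at key

end ContinuousLinearMap.IsPositive

end QuadraticForm

section Prox

variable {X : Type*} [NormedAddCommGroup X] [InnerProductSpace ℝ X]

noncomputable def proxObjective (H : X →L[ℝ] X) (φ : X → WithTop ℝ) (z x : X) : WithTop ℝ :=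
  φ x + ((2⁻¹ * ⟪H (x - z), x - z⟫ : ℝ) : WithTop ℝ)

variable {H : X →L[ℝ] X} {φ : X → WithTop ℝ}

lemma ne_top_of_isMin_proxObjective (hproper : ∃ x, φ x ≠ ⊤) {z p : X}
    (hp : ∀ x, proxObjective H φ z p ≤ proxObjective H φ z x) : φ p ≠ ⊤ := by
  obtain ⟨x₀, hx₀⟩ := hproper
  intro htop
  have h := hp x₀
  simp only [proxObjective, htop, top_add, top_le_iff, WithTop.add_eq_top] at h
  exact h.elim hx₀ WithTop.coe_ne_top

lemma add_inner_le_of_isMin_proxObjective (hH : (H : X →ₗ[ℝ] X).IsSymmetric)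
    (hconv : ∀ x y : X, ∀ a b : ℝ, 0 ≤ a → 0 ≤ b → a + b = 1 →
      φ (a • x + b • y) ≤ (a : WithTop ℝ) * φ x + (b : WithTop ℝ) * φ y)
    {z p : X} (hp : ∀ x, proxObjective H φ z p ≤ proxObjective H φ z x)
    {x : X} {a a' : ℝ} (ha : φ p = a) (hx : φ x = a') :
    a + ⟪H (z - p), x - p⟫ ≤ a' := by
  refine le_of_forall_le_add_mul (c := 2⁻¹ * ⟪H (x - p), x - p⟫) fun t ht0 ht1 => ?_
  have hseg : φ ((1 - t) • p + t • x) ≤ (((1 - t) * a + t * a' : ℝ) : WithTop ℝ) := by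
    have := hconv p x (1 - t) t (by linarith) ht0.le (by ring)
    rw [ha, hx] at this
    exact_mod_cast this
  have hcomp : a + 2⁻¹ * ⟪H (p - z), p - z⟫ ≤ (1 - t) * a + t * a' +
      2⁻¹ * ⟪H ((1 - t) • p + t • x - z), (1 - t) • p + t • x - z⟫ := by
    have := (hp ((1 - t) • p + t • x)).trans (add_le_add_left hseg _)
    simp only [proxObjective, ha] at this
    exact_mod_cast this
  have hpt : (1 - t) • p + t • x - z = (p - z) + t • (x - p) := by module
  have hneg : ⟪H (z - p), x - p⟫ = -⟪H (p - z), x - p⟫ := by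
    rw [← neg_sub, map_neg, inner_neg_left]
  rw [hpt, hH.inner_map_add_smul_self] at hcomp
  rw [hneg]
  refine le_of_mul_le_mul_left ?_ ht0
  linarith

lemma inner_map_self_sub_le_of_isMin_proxObjective (hH : (H : X →ₗ[ℝ] X).IsSymmetric)
    (hproper : ∃ x, φ x ≠ ⊤)
    (hconv : ∀ x y : X, ∀ a b : ℝ, 0 ≤ a → 0 ≤ b → a + b = 1 →
      φ (a • x + b • y) ≤ (a : WithTop ℝ) * φ x + (b : WithTop ℝ) * φ y)
    {z₁ z₂ p₁ p₂ : X} (hp₁ : ∀ x, proxObjective H φ z₁ p₁ ≤ proxObjective H φ z₁ x)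
    (hp₂ : ∀ x, proxObjective H φ z₂ p₂ ≤ proxObjective H φ z₂ x) :
    ⟪H (p₁ - p₂), p₁ - p₂⟫ ≤ ⟪H (z₁ - z₂), p₁ - p₂⟫ := by
  obtain ⟨a₁, ha₁⟩ := WithTop.ne_top_iff_exists.mp (ne_top_of_isMin_proxObjective hproper hp₁)
  obtain ⟨a₂, ha₂⟩ := WithTop.ne_top_iff_exists.mp (ne_top_of_isMin_proxObjective hproper hp₂)
  have h₁ := add_inner_le_of_isMin_proxObjective hH hconv hp₁ ha₁.symm ha₂.symm
  have h₂ := add_inner_le_of_isMin_proxObjective hH hconv hp₂ ha₂.symm ha₁.symm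
  have hsum : ⟪H (z₁ - p₁), p₂ - p₁⟫ + ⟪H (z₂ - p₂), p₁ - p₂⟫ =
      ⟪H (p₁ - p₂), p₁ - p₂⟫ - ⟪H (z₁ - z₂), p₁ - p₂⟫ := by
    simp only [map_sub, inner_sub_left, inner_sub_right]
    ring
  linarith

end Prox

theorem stmt_6_general {X : Type*} [NormedAddCommGroup X] [InnerProductSpace ℝ X]
    (H : X →L[ℝ] X)
    (hHsa : ∀ x y : X, ⟪H x, y⟫ = ⟪x, H y⟫)
    (hHcoer : ∃ c : ℝ, 0 < c ∧ ∀ x : X, c * ‖x‖ ^ 2 ≤ ⟪H x, x⟫)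
    (φ : X → WithTop ℝ)
    (hproper : ∃ x, φ x ≠ ⊤)
    (hconv : ∀ x y : X, ∀ a b : ℝ, 0 ≤ a → 0 ≤ b → a + b = 1 →
      φ (a • x + b • y) ≤ (a : WithTop ℝ) * φ x + (b : WithTop ℝ) * φ y)
    (z₁ z₂ p₁ p₂ : X)
    (hp₁ : ∀ x : X, φ p₁ + ((2⁻¹ * ⟪H (p₁ - z₁), p₁ - z₁⟫ : ℝ) : WithTop ℝ)
        ≤ φ x + ((2⁻¹ * ⟪H (x - z₁), x - z₁⟫ : ℝ) : WithTop ℝ))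
    (hp₂ : ∀ x : X, φ p₂ + ((2⁻¹ * ⟪H (p₂ - z₂), p₂ - z₂⟫ : ℝ) : WithTop ℝ)
        ≤ φ x + ((2⁻¹ * ⟪H (x - z₂), x - z₂⟫ : ℝ) : WithTop ℝ)) :
    ∀ Hinv : X →L[ℝ] X, Hinv ∘L H = 1 → H ∘L Hinv = 1 →
      ‖p₁ - p₂‖ ≤ Real.sqrt (‖H‖ * ‖Hinv‖) * ‖z₁ - z₂‖ := by
  intro Hinv _ hright
  obtain ⟨c, hc, hcoer⟩ := hHcoer
  have hpos : H.IsPositive :=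
    (isPositive_iff H).mpr ⟨hHsa, fun x => le_trans (by positivity) (hcoer x)⟩
  have hfirm := inner_map_self_sub_le_of_isMin_proxObjective hpos.isSymmetric hproper hconv hp₁ hp₂
  have hsq : ‖p₁ - p₂‖ ^ 2 ≤ (‖H‖ * ‖Hinv‖) * ‖z₁ - z₂‖ ^ 2 :=
    calc ‖p₁ - p₂‖ ^ 2 ≤ ‖Hinv‖ * ⟪H (p₁ - p₂), p₁ - p₂⟫ :=
          hpos.norm_sq_le_opNorm_mul_inner_map_self hright _
      _ ≤ ‖Hinv‖ * ⟪H (z₁ - z₂), z₁ - z₂⟫ := by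
          gcongr
          exact hpos.inner_map_self_le_of_le_inner hfirm
      _ ≤ ‖Hinv‖ * (‖H‖ * ‖z₁ - z₂‖ ^ 2) := by
          gcongr
          exact H.inner_map_self_le_opNorm_mul_sq _
      _ = ‖H‖ * ‖Hinv‖ * ‖z₁ - z₂‖ ^ 2 := by ring
  refine le_of_pow_le_pow_left₀ two_ne_zero (by positivity) ?_
  rwa [mul_pow, Real.sq_sqrt (by positivity)]

/-- The proximity operator `prox_φ^H` associated to a proper convex lower semicontinuous
function `φ : X → ℝ ∪ {+∞}` with respect to the metric induced by a bounded self-adjoint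
coercive operator `H` is Lipschitz with constant `√(‖H‖‖H⁻¹‖)`:
if `p₁ = prox_φ^H(z₁)` and `p₂ = prox_φ^H(z₂)`, then
`‖p₁ − p₂‖ ≤ √(‖H‖‖H⁻¹‖)·‖z₁ − z₂‖`. -/
theorem stmt_6 {X : Type*} [NormedAddCommGroup X] [InnerProductSpace ℝ X] [CompleteSpace X]
    (H : X →L[ℝ] X)
    (hHsa : ∀ x y : X, ⟪H x, y⟫ = ⟪x, H y⟫)
    (hHcoer : ∃ c : ℝ, 0 < c ∧ ∀ x : X, c * ‖x‖ ^ 2 ≤ ⟪H x, x⟫)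
    (φ : X → WithTop ℝ)
    (hproper : ∃ x, φ x ≠ ⊤)
    (hconv : ∀ x y : X, ∀ a b : ℝ, 0 ≤ a → 0 ≤ b → a + b = 1 →
      φ (a • x + b • y) ≤ (a : WithTop ℝ) * φ x + (b : WithTop ℝ) * φ y)
    (hlsc : LowerSemicontinuous φ)
    (z₁ z₂ p₁ p₂ : X)
    (hp₁ : ∀ x : X, φ p₁ + ((2⁻¹ * ⟪H (p₁ - z₁), p₁ - z₁⟫ : ℝ) : WithTop ℝ)
        ≤ φ x + ((2⁻¹ * ⟪H (x - z₁), x - z₁⟫ : ℝ) : WithTop ℝ))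
    (hp₂ : ∀ x : X, φ p₂ + ((2⁻¹ * ⟪H (p₂ - z₂), p₂ - z₂⟫ : ℝ) : WithTop ℝ)
        ≤ φ x + ((2⁻¹ * ⟪H (x - z₂), x - z₂⟫ : ℝ) : WithTop ℝ)) :
    ∀ Hinv : X →L[ℝ] X, Hinv ∘L H = 1 → H ∘L Hinv = 1 →
      ‖p₁ - p₂‖ ≤ Real.sqrt (‖H‖ * ‖Hinv‖) * ‖z₁ - z₂‖ :=
  stmt_6_general H hHsa hHcoer φ hproper hconv z₁ z₂ p₁ p₂ hp₁ hp₂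
end

section
/- Let A ∈ L(X,Y) be injective with closed range, set H = A*A and A† = (A*A)⁻¹A*, and let φ : X → ℝ ∪ {+∞} be proper, convex and lower semicontinuous. Then for every x ∈ X, if x̄ ∈ X minimizes z ↦ φ(z) + ½‖A(z − x)‖² over X, then A x̄ minimizes t ↦ φ(A†t) + ½‖t − Ax‖² over Y, and x̄ = A†(A x̄). That is, prox_φ^H = A† ∘ prox_{φ∘A†} ∘ A. -/
/-!
Since `A† A = 1`, the point `x̄` is `A† (A x̄)`, and every competitor `t ∈ Y` gives the competitor
`A† t ∈ X` for the original problem with the same value of `φ`. The map `A A†` is the orthogonal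
projection onto the range of `A` (its residual `t - A A† t` lies in `ker A* = (range A)ᗮ`), so by
Pythagoras `‖A (A† t - x)‖ ≤ ‖t - A x‖`, and minimality of `x̄` transfers to `A x̄`.
-/

open ContinuousLinearMap

section Pseudoinverse

variable {X Y : Type*} [NormedAddCommGroup X] [InnerProductSpace ℝ X] [CompleteSpace X]
    [NormedAddCommGroup Y] [InnerProductSpace ℝ Y] [CompleteSpace Y]

theorem pseudoinverse_apply_apply {A : X →L[ℝ] Y} {S : X →L[ℝ] X}
    (hS : S ∘L (adjoint A ∘L A) = 1) (z : X) : (S ∘L adjoint A) (A z) = z :=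
  congrArg (fun T : X →L[ℝ] X => T z) hS

theorem adjoint_apply_sub_apply_pseudoinverse {A : X →L[ℝ] Y} {S : X →L[ℝ] X}
    (hS : (adjoint A ∘L A) ∘L S = 1) (t : Y) :
    adjoint A (t - A ((S ∘L adjoint A) t)) = 0 := by
  have hAS : adjoint A (A (S (adjoint A t))) = adjoint A t :=
    congrArg (fun T : X →L[ℝ] X => T (adjoint A t)) hS
  rw [map_sub, comp_apply, hAS, sub_self]

theorem norm_apply_sub_apply_le_of_adjoint_eq_zero {A : X →L[ℝ] Y} {t : Y} {u : X}
    (h : adjoint A (t - A u) = 0) (x : X) : ‖A u - A x‖ ≤ ‖t - A x‖ := by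
  have horth : inner ℝ (A (u - x)) (t - A u) = 0 := by
    rw [← adjoint_inner_right, h, inner_zero_right]
  have hpyth := norm_add_sq_eq_norm_sq_add_norm_sq_real horth
  rw [map_sub, show A u - A x + (t - A u) = t - A x by abel] at hpyth
  nlinarith [norm_nonneg (A u - A x), norm_nonneg (t - A x), mul_self_nonneg ‖t - A u‖]

end Pseudoinverse

theorem stmt_7_general {X Y : Type*} [NormedAddCommGroup X] [InnerProductSpace ℝ X] [CompleteSpace X]
    [NormedAddCommGroup Y] [InnerProductSpace ℝ Y] [CompleteSpace Y]
    (A : X →L[ℝ] Y)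
    (S : X →L[ℝ] X)
    (hS1 : S ∘L (adjoint A ∘L A) = 1) (hS2 : (adjoint A ∘L A) ∘L S = 1)
    (Adag : Y →L[ℝ] X) (hAdag : Adag = S ∘L adjoint A)
    (φ : X → WithTop ℝ)
    (x xbar : X)
    (hxbar : ∀ z : X, φ xbar + ((2⁻¹ * ‖A (xbar - x)‖ ^ 2 : ℝ) : WithTop ℝ)
        ≤ φ z + ((2⁻¹ * ‖A (z - x)‖ ^ 2 : ℝ) : WithTop ℝ)) :
    (∀ t : Y, φ (Adag (A xbar)) + ((2⁻¹ * ‖A xbar - A x‖ ^ 2 : ℝ) : WithTop ℝ)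
        ≤ φ (Adag t) + ((2⁻¹ * ‖t - A x‖ ^ 2 : ℝ) : WithTop ℝ)) ∧
    xbar = Adag (A xbar) := by
  subst hAdag
  have hleft := pseudoinverse_apply_apply hS1
  refine ⟨fun t => ?_, (hleft xbar).symm⟩
  have hproj : ‖A ((S ∘L adjoint A) t - x)‖ ≤ ‖t - A x‖ := by
    rw [map_sub]
    exact norm_apply_sub_apply_le_of_adjoint_eq_zero (adjoint_apply_sub_apply_pseudoinverse hS2 t) x
  rw [hleft xbar, ← map_sub]
  calc _ ≤ φ ((S ∘L adjoint A) t) + ((2⁻¹ * ‖A ((S ∘L adjoint A) t - x)‖ ^ 2 : ℝ) : WithTop ℝ) :=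
        hxbar _
    _ ≤ _ := by gcongr; exact WithTop.coe_le_coe.2 (by gcongr)

/-- `prox_φ^{A*A} = A† ∘ prox_{φ∘A†} ∘ A`: if `A` is injective with closed range
(`S` the inverse of `A*A`, `A† = (A*A)⁻¹A* = S A*`), `φ` is proper convex lower
semicontinuous, and `x̄` minimizes `z ↦ φ(z) + ½‖A(z − x)‖²` over `X`, then `A x̄`
minimizes `t ↦ φ(A†t) + ½‖t − Ax‖²` over `Y`, and `x̄ = A†(A x̄)`. -/
theorem stmt_7 {X Y : Type*} [NormedAddCommGroup X] [InnerProductSpace ℝ X] [CompleteSpace X]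
    [NormedAddCommGroup Y] [InnerProductSpace ℝ Y] [CompleteSpace Y]
    (A : X →L[ℝ] Y)
    (hAinj : Function.Injective A) (hAcl : IsClosed (Set.range A))
    (S : X →L[ℝ] X)
    (hS1 : S ∘L (adjoint A ∘L A) = 1) (hS2 : (adjoint A ∘L A) ∘L S = 1)
    (Adag : Y →L[ℝ] X) (hAdag : Adag = S ∘L adjoint A)
    (φ : X → WithTop ℝ)
    (hproper : ∃ x, φ x ≠ ⊤)
    (hconv : ∀ x y : X, ∀ a b : ℝ, 0 ≤ a → 0 ≤ b → a + b = 1 →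
      φ (a • x + b • y) ≤ (a : WithTop ℝ) * φ x + (b : WithTop ℝ) * φ y)
    (hlsc : LowerSemicontinuous φ)
    (x xbar : X)
    (hxbar : ∀ z : X, φ xbar + ((2⁻¹ * ‖A (xbar - x)‖ ^ 2 : ℝ) : WithTop ℝ)
        ≤ φ z + ((2⁻¹ * ‖A (z - x)‖ ^ 2 : ℝ) : WithTop ℝ)) :
    (∀ t : Y, φ (Adag (A xbar)) + ((2⁻¹ * ‖A xbar - A x‖ ^ 2 : ℝ) : WithTop ℝ)
        ≤ φ (Adag t) + ((2⁻¹ * ‖t - A x‖ ^ 2 : ℝ) : WithTop ℝ)) ∧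
    xbar = Adag (A xbar) :=
  stmt_7_general A S hS1 hS2 Adag hAdag φ x xbar hxbar
end

section
/- Let F : Ω → Y be Gâteaux differentiable on the open set Ω ⊆ X and J : X → ℝ ∪ {+∞} proper, convex and lower semicontinuous, and set Φ₀(x) = ½‖F(x)‖² + J(x). Suppose x* ∈ Ω is a local minimizer of Φ₀ with J(x*) < +∞ and that F′(x*) is injective with closed range. Then x* is the unique minimizer over X of the linearized functional z ↦ ½‖F(x*) + F′(x*)(z − x*)‖² + J(z); equivalently, x* = prox_J^{H(x*)}(x* − F′(x*)†F(x*)) where H(x*) = F′(x*)*F′(x*) and F′(x*)† = (F′(x*)*F′(x*))⁻¹F′(x*)*. -/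
/-!
Along the segment `x* + t (z - x*)`, local minimality of `Φ₀` and convexity of `J` give
`t (J x* - J z) ≤ ½‖F(x* + t v)‖² - ½‖F x*‖²` for small `t > 0`; dividing by `t` and letting
`t → 0⁺` yields the variational inequality `J x* ≤ J z + ⟪F x*, F′(x*)(z - x*)⟫`. Expanding the
square, this says that the linearized functional grows at least like `½‖F′(x*)(z - x*)‖²` away
from `x*`, and injectivity of `F′(x*)` makes this growth strict.
-/

open Filter Set
open scoped Topology RealInnerProductSpace

lemma hasDerivAt_apply_add_smul_of_tendsto {X Y : Type*} [NormedAddCommGroup X] [NormedSpace ℝ X]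
    [NormedAddCommGroup Y] [NormedSpace ℝ Y] {F : X → Y} {x v : X} {w : Y}
    (h : Tendsto (fun t : ℝ => t⁻¹ • (F (x + t • v) - F x)) (𝓝[{(0:ℝ)}ᶜ] 0) (𝓝 w)) :
    HasDerivAt (fun t : ℝ => F (x + t • v)) w 0 := by
  rw [hasDerivAt_iff_tendsto_slope]
  convert h using 2 with t
  simp [slope_def_module]

lemma le_of_hasDerivWithinAt_Ioi_of_mul_le_sub {φ : ℝ → ℝ} {c d : ℝ}
    (hφ : HasDerivWithinAt φ d (Ioi 0) 0) (h : ∀ᶠ t in 𝓝[>] 0, t * c ≤ φ t - φ 0) : c ≤ d := by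
  rw [hasDerivWithinAt_iff_tendsto_slope, sdiff_singleton_eq_self (by simp)] at hφ
  refine ge_of_tendsto hφ ?_
  filter_upwards [h, self_mem_nhdsWithin] with t ht (htpos : 0 < t)
  rw [slope_def_field, sub_zero, le_div_iff₀ htpos, mul_comm]
  exact ht

section LinearizedLeastSquares

variable {X Y : Type*} [NormedAddCommGroup X] [InnerProductSpace ℝ X]
  [NormedAddCommGroup Y] [InnerProductSpace ℝ Y]

lemma le_add_inner_of_isLocalMin {F : X → Y} {J : X → WithTop ℝ} {x v : X}
    {w : Y} {a b : ℝ} (hF : HasDerivAt (fun t : ℝ => F (x + t • v)) w 0)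
    (hmin : IsLocalMin (fun y => ((2⁻¹ * ‖F y‖ ^ 2 : ℝ) : WithTop ℝ) + J y) x)
    (hJx : J x = a) (hseg : ∀ t ∈ Ioo (0 : ℝ) 1, J (x + t • v) ≤ (((1 - t) * a + t * b : ℝ))) :
    a ≤ b + ⟪F x, w⟫ := by
  have hφ : HasDerivAt (fun t : ℝ => 2⁻¹ * ‖F (x + t • v)‖ ^ 2) ⟪F x, w⟫ 0 :=
    (hF.norm_sq.const_mul 2⁻¹).congr_deriv (by simp)
  have hline : Tendsto (fun t : ℝ => x + t • v) (𝓝[>] 0) (𝓝 x) := by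
    have h : Tendsto (fun t : ℝ => x + t • v) (𝓝 0) (𝓝 (x + (0 : ℝ) • v)) :=
      (continuous_const.add (continuous_id.smul continuous_const)).tendsto 0
    simpa using h.mono_left nhdsWithin_le_nhds
  have hIoo : ∀ᶠ t in 𝓝[>] (0 : ℝ), t ∈ Ioo 0 1 := Ioo_mem_nhdsGT one_pos
  have hsub := le_of_hasDerivWithinAt_Ioi_of_mul_le_sub (c := a - b) hφ.hasDerivWithinAt ?_
  · linarith
  filter_upwards [hline.eventually hmin, hIoo] with t hmint ht
  have hlin := hmint.trans (add_le_add_right (hseg t ht) _)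
  rw [hJx] at hlin
  norm_cast at hlin
  simp only [zero_smul, add_zero]
  linarith

lemma half_sq_norm_add_le_of_isLocalMin {F : X → Y} {A : X →L[ℝ] Y} {J : X → WithTop ℝ} {x : X}
    (hF : ∀ v, HasDerivAt (fun t : ℝ => F (x + t • v)) (A v) 0)
    (hmin : IsLocalMin (fun y => ((2⁻¹ * ‖F y‖ ^ 2 : ℝ) : WithTop ℝ) + J y) x)
    (hconv : ∀ x y : X, ∀ a b : ℝ, 0 ≤ a → 0 ≤ b → a + b = 1 →
      J (a • x + b • y) ≤ (a : WithTop ℝ) * J x + (b : WithTop ℝ) * J y)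
    (hJx : J x ≠ ⊤) (z : X) :
    ((2⁻¹ * ‖F x‖ ^ 2 + 2⁻¹ * ‖A (z - x)‖ ^ 2 : ℝ) : WithTop ℝ) + J x
      ≤ ((2⁻¹ * ‖F x + A (z - x)‖ ^ 2 : ℝ) : WithTop ℝ) + J z := by
  obtain ⟨a, ha⟩ := WithTop.ne_top_iff_exists.mp hJx
  rcases eq_or_ne (J z) ⊤ with hJz | hJz
  · simp [hJz]
  obtain ⟨b, hb⟩ := WithTop.ne_top_iff_exists.mp hJz
  have hseg : ∀ t ∈ Ioo (0 : ℝ) 1, J (x + t • (z - x)) ≤ (((1 - t) * a + t * b : ℝ)) := by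
    intro t ht
    have h := hconv x z (1 - t) t (by linarith [ht.2]) ht.1.le (by ring)
    rwa [← ha, ← hb, show (1 - t) • x + t • z = x + t • (z - x) by module] at h
  have hvi := le_add_inner_of_isLocalMin (hF (z - x)) hmin ha.symm hseg
  rw [← ha, ← hb]
  norm_cast
  nlinarith [norm_add_sq_real (F x) (A (z - x))]

end LinearizedLeastSquares

theorem stmt_11_general {X Y : Type*} [NormedAddCommGroup X] [InnerProductSpace ℝ X]
    [NormedAddCommGroup Y] [InnerProductSpace ℝ Y]
    (Ω : Set X)
    (F : X → Y) (F' : X → (X →L[ℝ] Y))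
    (hdiff : ∀ x ∈ Ω, ∀ v : X,
      Filter.Tendsto (fun t : ℝ => t⁻¹ • (F (x + t • v) - F x))
        (nhdsWithin (0:ℝ) {(0:ℝ)}ᶜ) (nhds (F' x v)))
    (J : X → WithTop ℝ)
    (hconv : ∀ x y : X, ∀ a b : ℝ, 0 ≤ a → 0 ≤ b → a + b = 1 →
      J (a • x + b • y) ≤ (a : WithTop ℝ) * J x + (b : WithTop ℝ) * J y)
    (xs : X) (hxsΩ : xs ∈ Ω) (hxsJ : J xs ≠ ⊤)
    (hmin : ∀ᶠ x in nhds xs,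
      ((2⁻¹ * ‖F xs‖ ^ 2 : ℝ) : WithTop ℝ) + J xs
        ≤ ((2⁻¹ * ‖F x‖ ^ 2 : ℝ) : WithTop ℝ) + J x)
    (hinj : Function.Injective (F' xs)) :
    (∀ z : X,
      ((2⁻¹ * ‖F xs + (F' xs) (xs - xs)‖ ^ 2 : ℝ) : WithTop ℝ) + J xs
        ≤ ((2⁻¹ * ‖F xs + (F' xs) (z - xs)‖ ^ 2 : ℝ) : WithTop ℝ) + J z) ∧
    (∀ p : X,
      (∀ z : X,
        ((2⁻¹ * ‖F xs + (F' xs) (p - xs)‖ ^ 2 : ℝ) : WithTop ℝ) + J p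
          ≤ ((2⁻¹ * ‖F xs + (F' xs) (z - xs)‖ ^ 2 : ℝ) : WithTop ℝ) + J z) →
      p = xs) := by
  have growth := half_sq_norm_add_le_of_isLocalMin
    (fun v => hasDerivAt_apply_add_smul_of_tendsto (hdiff xs hxsΩ v)) hmin hconv hxsJ
  simp only [sub_self, map_zero, add_zero]
  refine ⟨fun z => le_trans ?_ (growth z), fun p hp => ?_⟩
  · gcongr
    exact WithTop.coe_le_coe.mpr (le_add_of_nonneg_right (by positivity))
  have h := (growth p).trans (hp xs)
  simp only [sub_self, map_zero, add_zero] at h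
  rw [WithTop.add_le_add_iff_right hxsJ, WithTop.coe_le_coe] at h
  have hA : F' xs (p - xs) = 0 := by
    rw [← norm_eq_zero (a := F' xs (p - xs))]
    nlinarith [norm_nonneg (F' xs (p - xs))]
  exact sub_eq_zero.mp (hinj (by rw [hA, map_zero]))

/-- Fixed point property of a local minimizer: if `x*` is a local minimizer of
`Φ₀(x) = ½‖F(x)‖² + J(x)` with `J(x*) < +∞` and `F′(x*)` is injective with closed range,
then `x*` is the unique minimizer over `X` of the linearized functional
`z ↦ ½‖F(x*) + F′(x*)(z − x*)‖² + J(z)` (equivalently,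
`x* = prox_J^{H(x*)}(x* − F′(x*)†F(x*))`). -/
theorem stmt_11 {X Y : Type*} [NormedAddCommGroup X] [InnerProductSpace ℝ X] [CompleteSpace X]
    [NormedAddCommGroup Y] [InnerProductSpace ℝ Y] [CompleteSpace Y]
    (Ω : Set X) (hΩopen : IsOpen Ω) (hΩne : Ω.Nonempty)
    (F : X → Y) (F' : X → (X →L[ℝ] Y))
    (hdiff : ∀ x ∈ Ω, ∀ v : X,
      Filter.Tendsto (fun t : ℝ => t⁻¹ • (F (x + t • v) - F x))
        (nhdsWithin (0:ℝ) {(0:ℝ)}ᶜ) (nhds (F' x v)))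
    (J : X → WithTop ℝ)
    (hproper : ∃ x, J x ≠ ⊤)
    (hconv : ∀ x y : X, ∀ a b : ℝ, 0 ≤ a → 0 ≤ b → a + b = 1 →
      J (a • x + b • y) ≤ (a : WithTop ℝ) * J x + (b : WithTop ℝ) * J y)
    (hlsc : LowerSemicontinuous J)
    (xs : X) (hxsΩ : xs ∈ Ω) (hxsJ : J xs ≠ ⊤)
    (hmin : ∀ᶠ x in nhds xs,
      ((2⁻¹ * ‖F xs‖ ^ 2 : ℝ) : WithTop ℝ) + J xs
        ≤ ((2⁻¹ * ‖F x‖ ^ 2 : ℝ) : WithTop ℝ) + J x)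
    (hinj : Function.Injective (F' xs)) (hcl : IsClosed (Set.range (F' xs))) :
    (∀ z : X,
      ((2⁻¹ * ‖F xs + (F' xs) (xs - xs)‖ ^ 2 : ℝ) : WithTop ℝ) + J xs
        ≤ ((2⁻¹ * ‖F xs + (F' xs) (z - xs)‖ ^ 2 : ℝ) : WithTop ℝ) + J z) ∧
    (∀ p : X,
      (∀ z : X,
        ((2⁻¹ * ‖F xs + (F' xs) (p - xs)‖ ^ 2 : ℝ) : WithTop ℝ) + J p
          ≤ ((2⁻¹ * ‖F xs + (F' xs) (z - xs)‖ ^ 2 : ℝ) : WithTop ℝ) + J z) →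
      p = xs) :=
  stmt_11_general Ω F F' hdiff J hconv xs hxsΩ hxsJ hmin hinj
end

section
/- Let G : D ⊆ X → X be a mapping, x* ∈ D a fixed point of G, and U ⊆ D an open set star-shaped with respect to x*. Assume ‖G(x) − G(x*)‖ ≤ q(‖x − x*‖)·‖x − x*‖ for all x ∈ U, where q : [0, R̄) → [0,+∞) is increasing, continuous at 0, and q(0) < 1. Define r̄ = sup{ r ∈ (0, R̄) : q(r) < 1 }. Then r̄ > 0, and for any r ∈ ℝ with 0 < r ≤ r̄ and B_r(x*) ⊆ U: G maps B_r(x*) into B_r(x*); hence for any x₀ ∈ B_r(x*) the sequence x_{n+1} = G(x_n) is well-defined and, setting q₀ = q(‖x₀ − x*‖), one has q₀ < 1 and ‖x_n − x*‖ ≤ q₀ⁿ ‖x₀ − x*‖ for all n. -/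
open scoped ENNReal

/-- Fixed point iteration with a contraction factor controlled by an increasing function:
if `G(x*) = x*`, `‖G(x) − G(x*)‖ ≤ q(‖x − x*‖)‖x − x*‖` on the open star-shaped set `U`,
`q : [0,R̄) → [0,∞)` is increasing, continuous at `0`, with `q(0) < 1`, and
`r̄ = sup{r ∈ (0,R̄) : q(r) < 1}`, then `r̄ > 0` and for any `0 < r ≤ r̄` with
`B_r(x*) ⊆ U`, `G` maps `B_r(x*)` into itself and for every `x₀ ∈ B_r(x*)` the sequence
`x_{n+1} = G(x_n)` satisfies `q₀ = q(‖x₀ − x*‖) < 1` and `‖x_n − x*‖ ≤ q₀ⁿ‖x₀ − x*‖`. -/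
theorem stmt_13 {X : Type*} [NormedAddCommGroup X] [InnerProductSpace ℝ X]
    (D U : Set X) (hUD : U ⊆ D) (hUopen : IsOpen U)
    (G : X → X) (xs : X) (hxsD : xs ∈ D) (hxsU : xs ∈ U) (hfix : G xs = xs)
    (hstar : ∀ x ∈ U, ∀ t ∈ Set.Icc (0:ℝ) 1, xs + t • (x - xs) ∈ U)
    (Rb : ℝ≥0∞) (hRb : 0 < Rb)
    (q : ℝ → ℝ)
    (hqnonneg : ∀ u : ℝ, 0 ≤ u → ENNReal.ofReal u < Rb → 0 ≤ q u)
    (hqmono : ∀ u v : ℝ, 0 ≤ u → u ≤ v → ENNReal.ofReal v < Rb → q u ≤ q v)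
    (hqcont : ContinuousWithinAt q (Set.Ici 0) 0)
    (hq01 : q 0 < 1)
    (hG : ∀ x ∈ U, ‖G x - G xs‖ ≤ q ‖x - xs‖ * ‖x - xs‖)
    (rbar : ℝ≥0∞)
    (hrbar : rbar = sSup {ρ : ℝ≥0∞ | 0 < ρ ∧ ρ < Rb ∧ q ρ.toReal < 1}) :
    0 < rbar ∧
    ∀ r : ℝ, 0 < r → ENNReal.ofReal r ≤ rbar → Metric.ball xs r ⊆ U →
      Set.MapsTo G (Metric.ball xs r) (Metric.ball xs r) ∧
      ∀ x₀ ∈ Metric.ball xs r,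
        q ‖x₀ - xs‖ < 1 ∧
        ∀ n : ℕ, ‖G^[n] x₀ - xs‖ ≤ q ‖x₀ - xs‖ ^ n * ‖x₀ - xs‖ := by

  have hmem : {u : ℝ | q u < 1} ∈ nhdsWithin 0 (Set.Ici 0) :=
    hqcont (isOpen_Iio.mem_nhds hq01)
  obtain ⟨ε, hε, hballε⟩ := Metric.mem_nhdsWithin_iff.mp hmem
  obtain ⟨c, hc0, hcRb⟩ := exists_between hRb
  have hcne : c ≠ ⊤ := (hcRb.trans_le le_top).ne
  set δ : ℝ := min (ε/2) c.toReal with hδdef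
  have hδ0 : 0 < δ := lt_min (by linarith) (ENNReal.toReal_pos hc0.ne' hcne)
  have hδq : q δ < 1 := by
    apply hballε
    constructor
    · simp only [Metric.mem_ball, Real.dist_eq, sub_zero, abs_of_pos hδ0]
      calc δ ≤ ε/2 := min_le_left _ _
        _ < ε := by linarith
    · exact le_of_lt hδ0
  have hδRb : ENNReal.ofReal δ < Rb := by
    calc ENNReal.ofReal δ ≤ ENNReal.ofReal c.toReal :=
          ENNReal.ofReal_le_ofReal (min_le_right _ _)
      _ = c := ENNReal.ofReal_toReal hcne
      _ < Rb := hcRb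
  have hρmem : ENNReal.ofReal δ ∈ {ρ : ℝ≥0∞ | 0 < ρ ∧ ρ < Rb ∧ q ρ.toReal < 1} := by
    refine ⟨ENNReal.ofReal_pos.mpr hδ0, hδRb, ?_⟩
    rwa [ENNReal.toReal_ofReal hδ0.le]
  have hrbar_pos : 0 < rbar := by
    rw [hrbar]
    exact lt_of_lt_of_le (ENNReal.ofReal_pos.mpr hδ0) (le_sSup hρmem)
  refine ⟨hrbar_pos, ?_⟩
  intro r hr hr_le hball_sub
  have key : ∀ x ∈ Metric.ball xs r, q ‖x - xs‖ < 1 ∧ ENNReal.ofReal ‖x - xs‖ < Rb := by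
    intro x hx
    have hxr : ‖x - xs‖ < r := by rwa [Metric.mem_ball, dist_eq_norm] at hx
    have h1 : ENNReal.ofReal ‖x - xs‖ < rbar :=
      lt_of_lt_of_le ((ENNReal.ofReal_lt_ofReal_iff hr).mpr hxr) hr_le
    rw [hrbar] at h1
    obtain ⟨ρ, hρ, hlt⟩ := lt_sSup_iff.mp h1
    obtain ⟨hρ0, hρRb, hρq⟩ := hρ
    have hρne : ρ ≠ ⊤ := (hρRb.trans_le le_top).ne
    have hlt' : ‖x - xs‖ < ρ.toReal := by
      rw [← ENNReal.ofReal_toReal hρne] at hlt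
      exact (ENNReal.ofReal_lt_ofReal_iff (ENNReal.toReal_pos hρ0.ne' hρne)).mp hlt
    have hRbx : ENNReal.ofReal ‖x - xs‖ < Rb := lt_trans hlt hρRb
    have hρRb' : ENNReal.ofReal ρ.toReal < Rb := by rwa [ENNReal.ofReal_toReal hρne]
    exact ⟨lt_of_le_of_lt (hqmono _ _ (norm_nonneg _) hlt'.le hρRb') hρq, hRbx⟩
  have maps : Set.MapsTo G (Metric.ball xs r) (Metric.ball xs r) := by
    intro x hx
    obtain ⟨hq1, hRbx⟩ := key x hx
    have hxr : ‖x - xs‖ < r := by rwa [Metric.mem_ball, dist_eq_norm] at hx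
    have hGx := hG x (hball_sub hx)
    rw [hfix] at hGx
    rw [Metric.mem_ball, dist_eq_norm]
    calc ‖G x - xs‖ ≤ q ‖x - xs‖ * ‖x - xs‖ := hGx
      _ ≤ 1 * ‖x - xs‖ := mul_le_mul_of_nonneg_right hq1.le (norm_nonneg _)
      _ = ‖x - xs‖ := one_mul _
      _ < r := hxr
  refine ⟨maps, ?_⟩
  intro x₀ hx₀
  obtain ⟨hq0lt, hRb0⟩ := key x₀ hx₀
  have hq0nn : 0 ≤ q ‖x₀ - xs‖ := hqnonneg _ (norm_nonneg _) hRb0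
  refine ⟨hq0lt, ?_⟩
  intro n
  induction n with
  | zero => simp
  | succ n ih =>
    have hqn1 : q ‖x₀ - xs‖ ^ n ≤ 1 := pow_le_one₀ hq0nn hq0lt.le
    have hxn_le : ‖G^[n] x₀ - xs‖ ≤ ‖x₀ - xs‖ :=
      ih.trans (by nlinarith [norm_nonneg (x₀ - xs)])
    have hxn_ball : G^[n] x₀ ∈ Metric.ball xs r := by
      rw [Metric.mem_ball, dist_eq_norm]
      exact lt_of_le_of_lt hxn_le (by rwa [Metric.mem_ball, dist_eq_norm] at hx₀)
    have hGx := hG _ (hball_sub hxn_ball)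
    rw [hfix] at hGx
    have hmon : q ‖G^[n] x₀ - xs‖ ≤ q ‖x₀ - xs‖ :=
      hqmono _ _ (norm_nonneg _) hxn_le hRb0
    rw [Function.iterate_succ_apply']
    calc ‖G (G^[n] x₀) - xs‖ ≤ q ‖G^[n] x₀ - xs‖ * ‖G^[n] x₀ - xs‖ := hGx
      _ ≤ q ‖x₀ - xs‖ * (q ‖x₀ - xs‖ ^ n * ‖x₀ - xs‖) :=
          mul_le_mul hmon ih (norm_nonneg _) hq0nn
      _ = q ‖x₀ - xs‖ ^ (n+1) * ‖x₀ - xs‖ := by ring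
end
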